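/- arXiv:2302.11094 — 11 statements merged into one kernel-verified Lean document; each statement's English description precedes it below -/
import Mathlib

section
/- Suppose that (Z,d_Z) is κ-uniformly perfect with κ > 1 and that f : (Z,d_Z) → (W,d_W) is a (θ,λ)-power quasisymmetric homeomorphism with θ ≥ 1 and λ ≥ 1. If for some r with 0 < r < 2·diam Z the map f is locally (θ, 1/θ, r)-biHölder continuous with locally biHölder continuity coefficient C ≥ 1, then f is r-uniformly bounded; explicitly, for all x ∈ Z, r^θ/(μ^θ C) ≤ diam f(B(x,r)) ≤ 2C r^{1/θ}, where μ = max{8, κ}. -/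
open Metric Set

/-- `(Z, d_Z)` is `κ`-uniformly perfect: for every `x ∈ Z` and `r > 0`, the annulus
`B(x, r) \ B(x, r/κ)` is nonempty whenever `Z \ B(x, r)` is nonempty. -/
def UniformlyPerfect (Z : Type*) [MetricSpace Z] (κ : ℝ) : Prop :=
  ∀ (x : Z) (r : ℝ), 0 < r → (Set.univ \ ball x r).Nonempty →
    (ball x r \ ball x (r / κ)).Nonempty

/-- The control function `η_{λ,θ}` of a `(θ, λ)`-power quasisymmetric mapping:
`η(t) = λ t^{1/θ}` for `t < 1` and `η(t) = λ t^θ` for `t ≥ 1`. -/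
noncomputable def etaPow (lam θ t : ℝ) : ℝ :=
  if t < 1 then lam * t ^ (1 / θ) else lam * t ^ θ

/-- Let `Z` be `κ`-uniformly perfect (`κ > 1`) and let `f : Z → W` be a
`(θ, λ)`-power quasisymmetric homeomorphism (`θ ≥ 1`, `λ ≥ 1`). If for some
`0 < r < 2 ⬝ diam Z` the map `f` is locally `(θ, 1/θ, r)`-biHölder continuous with
coefficient `C ≥ 1`, then `f` is `r`-uniformly bounded; explicitly, for all `x ∈ Z`,
`r^θ / (μ^θ C) ≤ diam f(B(x, r)) ≤ 2 C r^{1/θ}`, where `μ = max 8 κ`. -/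
theorem locally_biHolder_imp_uniformly_bounded {Z W : Type*} [MetricSpace Z] [MetricSpace W]
    (κ : ℝ) (hκ : 1 < κ) (hZ : UniformlyPerfect Z κ)
    (θ lam : ℝ) (hθ : 1 ≤ θ) (hlam : 1 ≤ lam)
    (f : Z ≃ₜ W)
    (hqs : ∀ x y z : Z, y ≠ z →
      dist (f x) (f z) / dist (f y) (f z) ≤ etaPow lam θ (dist x z / dist y z))
    (r : ℝ) (hr : 0 < r) (hr' : ENNReal.ofReal r < 2 * EMetric.diam (Set.univ : Set Z))
    (C : ℝ) (hC : 1 ≤ C)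
    (hf : ∀ x y : Z, dist x y < r →
      C⁻¹ * dist x y ^ θ ≤ dist (f x) (f y) ∧ dist (f x) (f y) ≤ C * dist x y ^ (1 / θ)) :
    ∀ x : Z,
      ENNReal.ofReal (r ^ θ / ((max 8 κ) ^ θ * C)) ≤ EMetric.diam (f '' ball x r) ∧
      EMetric.diam (f '' ball x r) ≤ ENNReal.ofReal (2 * C * r ^ (1 / θ)) := by
  intro x
  set μ : ℝ := max 8 κ with hμdef
  have hμ8 : (8:ℝ) ≤ μ := le_max_left _ _
  have hμκ : κ ≤ μ := le_max_right _ _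
  have hμ0 : (0:ℝ) < μ := lt_of_lt_of_le (by norm_num) hμ8
  have hC0 : (0:ℝ) < C := lt_of_lt_of_le one_pos hC
  have hθ0 : (0:ℝ) < θ := lt_of_lt_of_le one_pos hθ
  -- find a point y with r/μ ≤ dist x y < r
  have hy : ∃ y : Z, r / μ ≤ dist x y ∧ dist x y < r := by
    by_cases h : (Set.univ \ ball x r).Nonempty
    · obtain ⟨y, hy1, hy2⟩ := hZ x r hr h
      refine ⟨y, ?_, mem_ball'.mp hy1⟩
      have h1 : r / μ ≤ r / κ :=
        div_le_div_of_nonneg_left hr.le (lt_trans one_pos hκ) hμκ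
      have h2 : r / κ ≤ dist x y := by
        have := hy2
        rw [mem_ball'] at this
        exact not_lt.mp (by simpa [dist_comm] using this)
      linarith
    · -- then ball x r = univ, but diam > r/2 gives a far point
      have hball : ∀ z : Z, z ∈ ball x r := by
        intro z
        by_contra hz
        exact h ⟨z, mem_univ z, hz⟩
      have hdiam : ENNReal.ofReal (r / 2) < EMetric.diam (Set.univ : Set Z) := by
        by_contra hcon
        push_neg at hcon
        have : 2 * EMetric.diam (Set.univ : Set Z) ≤ ENNReal.ofReal r := by
          calc 2 * EMetric.diam (Set.univ : Set Z)
              ≤ 2 * ENNReal.ofReal (r / 2) := by exact mul_le_mul_right hcon 2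
            _ = ENNReal.ofReal r := by
                rw [← ENNReal.ofReal_ofNat, ← ENNReal.ofReal_mul (by norm_num)]
                congr 1; ring
        exact absurd hr' (not_lt.mpr this)
      obtain ⟨u, _, v, _, huv⟩ : ∃ u ∈ (Set.univ : Set Z), ∃ v ∈ (Set.univ : Set Z),
          ENNReal.ofReal (r / 2) < edist u v := by
        by_contra hcon
        push_neg at hcon
        exact absurd hdiam (not_lt.mpr (EMetric.diam_le hcon))
      have huv' : r / 2 < dist u v := by
        rw [edist_dist] at huv
        exact (ENNReal.ofReal_lt_ofReal_iff_of_nonneg (by positivity)).mp huv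
      have : r / 4 ≤ dist x u ∨ r / 4 ≤ dist x v := by
        by_contra hcon
        push_neg at hcon
        have := dist_triangle u x v
        rw [dist_comm u x] at this
        linarith [hcon.1, hcon.2]
      rcases this with h4 | h4
      · exact ⟨u, le_trans (by rw [div_le_div_iff₀ hμ0 (by norm_num)]; nlinarith) h4,
          mem_ball'.mp (hball u)⟩
      · exact ⟨v, le_trans (by rw [div_le_div_iff₀ hμ0 (by norm_num)]; nlinarith) h4,
          mem_ball'.mp (hball v)⟩
  obtain ⟨y, hy1, hy2⟩ := hy
  constructor
  · -- lower bound
    have hmemx : f x ∈ f '' ball x r := mem_image_of_mem f (mem_ball_self hr)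
    have hmemy : f y ∈ f '' ball x r := mem_image_of_mem f (mem_ball'.mpr hy2)
    refine le_trans ?_ (EMetric.edist_le_diam_of_mem hmemx hmemy)
    rw [edist_dist]
    apply ENNReal.ofReal_le_ofReal
    have hlow := (hf x y hy2).1
    have hmono : (r / μ) ^ θ ≤ dist x y ^ θ :=
      Real.rpow_le_rpow (by positivity) hy1 hθ0.le
    have key : r ^ θ / (μ ^ θ * C) = C⁻¹ * (r / μ) ^ θ := by
      rw [Real.div_rpow hr.le hμ0.le]
      field_simp
    rw [key]
    calc C⁻¹ * (r / μ) ^ θ ≤ C⁻¹ * dist x y ^ θ := by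
          apply mul_le_mul_of_nonneg_left hmono (by positivity)
      _ ≤ dist (f x) (f y) := hlow
  · -- upper bound
    apply EMetric.diam_le
    rintro _ ⟨u, hu, rfl⟩ _ ⟨v, hv, rfl⟩
    rw [edist_dist]
    apply ENNReal.ofReal_le_ofReal
    rw [mem_ball] at hu hv
    have hu' : dist (f u) (f x) ≤ C * r ^ (1 / θ) := by
      refine le_trans ((hf u x hu).2) ?_
      apply mul_le_mul_of_nonneg_left _ hC0.le
      exact Real.rpow_le_rpow dist_nonneg hu.le (by positivity)
    have hv' : dist (f x) (f v) ≤ C * r ^ (1 / θ) := by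
      have : dist x v < r := by rwa [dist_comm]
      refine le_trans ((hf x v this).2) ?_
      apply mul_le_mul_of_nonneg_left _ hC0.le
      exact Real.rpow_le_rpow dist_nonneg this.le (by positivity)
    calc dist (f u) (f v) ≤ dist (f u) (f x) + dist (f x) (f v) := dist_triangle _ _ _
      _ ≤ C * r ^ (1 / θ) + C * r ^ (1 / θ) := add_le_add hu' hv'
      _ = 2 * C * r ^ (1 / θ) := by ring
end

section
/- Suppose that (Z,d_Z) is κ-uniformly perfect with κ > 1 and that f : (Z,d_Z) → (W,d_W) is a (θ,λ)-power quasisymmetric homeomorphism with θ ≥ 1 and λ ≥ 1. If for some r with 0 < r < 2·diam Z the map f is r-uniformly bounded, with constants 0 < a < b such that a ≤ diam f(B(x,r)) ≤ b for all x ∈ Z, then f is locally (θ, 1/θ, r)-biHölder continuous; explicitly, for all x, y ∈ Z with d_Z(x,y) < r, a/(3λ²(rμ)^θ) · d_Z(x,y)^θ ≤ d_W(f(x),f(y)) ≤ λ b μ^{1/θ} r^{−1/θ} · d_Z(x,y)^{1/θ}, where μ = max{8, κ}. -/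
open Metric Set

/-- Let `Z` be `κ`-uniformly perfect (`κ > 1`) and let `f : Z → W` be a
`(θ, λ)`-power quasisymmetric homeomorphism (`θ ≥ 1`, `λ ≥ 1`). If for some
`0 < r < 2 ⬝ diam Z` the map `f` is `r`-uniformly bounded, with constants `0 < a < b` such
that `a ≤ diam f(B(ξ, r)) ≤ b` for all `ξ ∈ Z`, then `f` is locally
`(θ, 1/θ, r)`-biHölder continuous; explicitly, for all `x, y ∈ Z` with `d_Z(x, y) < r`,
`a / (3 λ² (r μ)^θ) ⬝ d_Z(x, y)^θ ≤ d_W(f(x), f(y)) ≤ λ b μ^{1/θ} / r^{1/θ} ⬝ d_Z(x, y)^{1/θ}`,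
where `μ = max 8 κ`. -/
theorem uniformly_bounded_imp_locally_biHolder {Z W : Type*} [MetricSpace Z] [MetricSpace W]
    (κ : ℝ) (hκ : 1 < κ) (hZ : UniformlyPerfect Z κ)
    (θ lam : ℝ) (hθ : 1 ≤ θ) (hlam : 1 ≤ lam)
    (f : Z ≃ₜ W)
    (hqs : ∀ x y z : Z, y ≠ z →
      dist (f x) (f z) / dist (f y) (f z) ≤ etaPow lam θ (dist x z / dist y z))
    (r : ℝ) (hr : 0 < r) (hr' : ENNReal.ofReal r < 2 * EMetric.diam (Set.univ : Set Z))
    (a b : ℝ) (ha : 0 < a) (hab : a < b)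
    (hub : ∀ ξ : Z, ENNReal.ofReal a ≤ EMetric.diam (f '' ball ξ r) ∧
      EMetric.diam (f '' ball ξ r) ≤ ENNReal.ofReal b) :
    ∀ x y : Z, dist x y < r →
      a / (3 * lam ^ 2 * (r * max 8 κ) ^ θ) * dist x y ^ θ ≤ dist (f x) (f y) ∧
      dist (f x) (f y) ≤ lam * b * (max 8 κ) ^ (1 / θ) / r ^ (1 / θ) * dist x y ^ (1 / θ) := by
  intro x y hxy
  set μ := max 8 κ with hμdef
  have hκ0 : (0:ℝ) < κ := by linarith
  have hμ8 : (8:ℝ) ≤ μ := le_max_left _ _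
  have hμκ : κ ≤ μ := le_max_right _ _
  have hμ0 : (0:ℝ) < μ := by linarith
  have hθ0 : (0:ℝ) < θ := by linarith
  have hθi : (0:ℝ) < 1/θ := by positivity
  have hlam0 : (0:ℝ) < lam := by linarith
  have hb0 : (0:ℝ) < b := by linarith
  -- images of points in a ball are within distance b
  have himg : ∀ (ξ u v : Z), u ∈ ball ξ r → v ∈ ball ξ r → dist (f u) (f v) ≤ b := by
    intro ξ u v hu hv
    have h1 : edist (f u) (f v) ≤ EMetric.diam (f '' ball ξ r) :=
      EMetric.edist_le_diam_of_mem (mem_image_of_mem f hu) (mem_image_of_mem f hv)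
    have h2 := h1.trans (hub ξ).2
    rw [edist_dist] at h2
    exact (ENNReal.ofReal_le_ofReal_iff hb0.le).1 h2
  by_cases hxy0 : x = y
  · subst hxy0
    simp only [dist_self, Real.zero_rpow (ne_of_gt hθ0), Real.zero_rpow (ne_of_gt hθi),
      mul_zero]
    exact ⟨le_refl 0, le_refl 0⟩
  have ht : 0 < dist x y := dist_pos.2 hxy0
  set t := dist x y with htdef
  -- there exist points at distance > r/2
  have hdiam2 : ENNReal.ofReal (r/2) < EMetric.diam (Set.univ : Set Z) := by
    by_contra h
    push_neg at h
    have h2 : 2 * EMetric.diam (Set.univ : Set Z) ≤ 2 * ENNReal.ofReal (r/2) :=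
      mul_le_mul_right h 2
    have h3 : (2 : ENNReal) * ENNReal.ofReal (r/2) = ENNReal.ofReal r := by
      rw [← ENNReal.ofReal_ofNat 2, ← ENNReal.ofReal_mul (by norm_num)]
      congr 1
      ring
    rw [h3] at h2
    exact absurd (hr'.trans_le h2) (lt_irrefl _)
  obtain ⟨p, q, hpq⟩ : ∃ p q : Z, r/2 < dist p q := by
    by_contra h
    push_neg at h
    have hle : EMetric.diam (Set.univ : Set Z) ≤ ENNReal.ofReal (r/2) :=
      EMetric.diam_le fun u _ v _ => by
        rw [edist_dist]; exact ENNReal.ofReal_le_ofReal (h u v)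
    exact absurd hdiam2 (not_lt.2 hle)
  -- Claim A: for every ξ there is a point z with r/μ ≤ d(ξ,z) < r
  have claimA : ∀ ξ : Z, ∃ z : Z, r / μ ≤ dist ξ z ∧ dist ξ z < r := by
    intro ξ
    have hq' : ∃ q' : Z, r/4 < dist ξ q' := by
      by_cases hp : r/4 < dist ξ p
      · exact ⟨p, hp⟩
      · refine ⟨q, ?_⟩
        push_neg at hp
        have tri : dist p q ≤ dist p ξ + dist ξ q := dist_triangle _ _ _
        rw [dist_comm p ξ] at tri
        linarith
    obtain ⟨q', hq'⟩ := hq'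
    set ρ := r * κ / μ with hρdef
    have hρ0 : 0 < ρ := by positivity
    have hρr : ρ ≤ r := by
      rw [hρdef, div_le_iff₀ hμ0]
      exact mul_le_mul_of_nonneg_left hμκ hr.le
    have hρκ : ρ / κ = r / μ := by
      rw [hρdef]; field_simp
    by_cases hcase : (Set.univ \ ball ξ ρ).Nonempty
    · obtain ⟨z, hz⟩ := hZ ξ ρ hρ0 hcase
      have hz1 : dist z ξ < ρ := mem_ball.1 hz.1
      have hz2 : ¬ dist z ξ < ρ / κ := fun h => hz.2 (mem_ball.2 h)
      push_neg at hz2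
      rw [hρκ] at hz2
      rw [dist_comm z ξ] at hz1 hz2
      exact ⟨z, hz2, hz1.trans_le hρr⟩
    · have hq'' : q' ∈ ball ξ ρ := by
        by_contra h
        exact hcase ⟨q', mem_univ _, h⟩
      have hq2 : dist q' ξ < ρ := mem_ball.1 hq''
      rw [dist_comm q' ξ] at hq2
      refine ⟨q', ?_, hq2.trans_le hρr⟩
      have : r / μ ≤ r / 8 := div_le_div_of_nonneg_left hr.le (by norm_num) hμ8
      linarith
  have hfyx : (0:ℝ) < dist (f y) (f x) := by
    rw [dist_pos]
    intro h
    exact hxy0 (f.injective h).symm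
  have hyball : y ∈ ball x r := mem_ball.2 (by rwa [dist_comm y x])
  have hxball : x ∈ ball x r := mem_ball_self hr
  constructor
  · -- lower bound
    have h23 : ENNReal.ofReal (2*a/3) < EMetric.diam (f '' ball x r) :=
      lt_of_lt_of_le ((ENNReal.ofReal_lt_ofReal_iff_of_nonneg (by linarith)).2 (by linarith))
        (hub x).1
    obtain ⟨u', hu', v', hv', huv⟩ :
        ∃ u' ∈ f '' ball x r, ∃ v' ∈ f '' ball x r, ENNReal.ofReal (2*a/3) < edist u' v' := by
      by_contra h
      push_neg at h
      exact absurd (EMetric.diam_le fun u hu v hv => h u hu v hv) (not_le.2 h23)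
    obtain ⟨u, hu, rfl⟩ := hu'
    obtain ⟨v, hv, rfl⟩ := hv'
    rw [edist_dist] at huv
    have huv' : 2*a/3 < dist (f u) (f v) :=
      (ENNReal.ofReal_lt_ofReal_iff_of_nonneg (by linarith)).1 huv
    obtain ⟨w, hwball, hwdist⟩ : ∃ w : Z, w ∈ ball x r ∧ a/3 < dist (f x) (f w) := by
      by_cases h : a/3 < dist (f x) (f u)
      · exact ⟨u, hu, h⟩
      · refine ⟨v, hv, ?_⟩
        have tri : dist (f u) (f v) ≤ dist (f u) (f x) + dist (f x) (f v) := dist_triangle _ _ _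
        rw [dist_comm (f u) (f x)] at tri
        push_neg at h
        linarith
    have h1 := hqs w y x (fun h => hxy0 h.symm)
    rw [dist_comm y x] at h1
    have hwx : dist w x < r := mem_ball.1 hwball
    have hrt1 : 1 < r / t := (one_lt_div ht).2 hxy
    have hsle : dist w x / t < r / t := by gcongr
    have heta : etaPow lam θ (dist w x / t) ≤ lam * (r/t) ^ θ := by
      unfold etaPow
      split_ifs with h
      · have hle1 : (dist w x / t) ^ (1/θ) ≤ 1 :=
          Real.rpow_le_one (by positivity) h.le hθi.le
        have hge1 : (1:ℝ) ≤ (r/t) ^ θ := by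
          calc (1:ℝ) = 1 ^ θ := (Real.one_rpow θ).symm
          _ ≤ (r/t) ^ θ := Real.rpow_le_rpow (by norm_num) hrt1.le hθ0.le
        exact mul_le_mul_of_nonneg_left (hle1.trans hge1) hlam0.le
      · have hmono : (dist w x / t) ^ θ ≤ (r/t) ^ θ :=
          Real.rpow_le_rpow (by positivity) hsle.le hθ0.le
        exact mul_le_mul_of_nonneg_left hmono hlam0.le
    have h1' : dist (f w) (f x) ≤ lam * (r/t) ^ θ * dist (f y) (f x) := by
      have h2 := (div_le_iff₀ hfyx).1 h1
      have hmul : etaPow lam θ (dist w x / t) * dist (f y) (f x) ≤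
          lam * (r/t) ^ θ * dist (f y) (f x) :=
        mul_le_mul_of_nonneg_right heta hfyx.le
      linarith
    rw [dist_comm (f x) (f y)]
    have hrθ : 0 < r ^ θ := Real.rpow_pos_of_pos hr θ
    have htθ : 0 < t ^ θ := Real.rpow_pos_of_pos ht θ
    have hμθ1 : (1:ℝ) ≤ μ ^ θ := by
      calc (1:ℝ) = 1 ^ θ := (Real.one_rpow θ).symm
      _ ≤ μ ^ θ := Real.rpow_le_rpow (by norm_num) (by linarith) hθ0.le
    have hdiv : (r/t) ^ θ = r ^ θ / t ^ θ := Real.div_rpow hr.le ht.le θ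
    have hkey : a/3 < lam * (r ^ θ / t ^ θ) * dist (f y) (f x) := by
      rw [← hdiv]
      calc a/3 < dist (f x) (f w) := hwdist
      _ = dist (f w) (f x) := dist_comm _ _
      _ ≤ lam * (r/t) ^ θ * dist (f y) (f x) := h1'
    have hD2 : a / 3 * t ^ θ < lam * r ^ θ * dist (f y) (f x) := by
      have h' : a/3 < lam * r ^ θ * dist (f y) (f x) / t ^ θ := by
        calc a/3 < lam * (r ^ θ / t ^ θ) * dist (f y) (f x) := hkey
        _ = lam * r ^ θ * dist (f y) (f x) / t ^ θ := by ring
      exact (lt_div_iff₀ htθ).1 h'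
    have hmulrpow : (r * μ) ^ θ = r ^ θ * μ ^ θ := Real.mul_rpow hr.le hμ0.le
    rw [hmulrpow, div_mul_eq_mul_div, div_le_iff₀ (by positivity)]
    have hlamμ : lam ≤ lam ^ 2 * μ ^ θ := by
      calc lam = lam * 1 := (mul_one _).symm
      _ ≤ lam * lam := mul_le_mul_of_nonneg_left hlam hlam0.le
      _ = lam ^ 2 * 1 := by ring
      _ ≤ lam ^ 2 * μ ^ θ := mul_le_mul_of_nonneg_left hμθ1 (by positivity)
    have hhint : 0 ≤ (lam ^ 2 * μ ^ θ - lam) * (r ^ θ * dist (f y) (f x)) :=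
      mul_nonneg (by linarith) (mul_nonneg hrθ.le dist_nonneg)
    linarith [hD2, hhint]
  · -- upper bound
    obtain ⟨z, hz1, hz2⟩ := claimA x
    have hzx : z ≠ x := by
      intro h
      rw [h, dist_self] at hz1
      have : 0 < r / μ := by positivity
      linarith
    have h1 := hqs y z x hzx
    rw [dist_comm y x, dist_comm z x] at h1
    have hfzx : (0:ℝ) < dist (f z) (f x) := by
      rw [dist_pos]; intro h; exact hzx (f.injective h)
    have hzball : z ∈ ball x r := mem_ball.2 (by rwa [dist_comm z x])
    have hbz : dist (f z) (f x) ≤ b := himg x z x hzball hxball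
    have hetapos : 0 ≤ etaPow lam θ (t / dist x z) := by
      unfold etaPow; split_ifs <;> positivity
    have h1' : dist (f y) (f x) ≤ etaPow lam θ (t / dist x z) * b := by
      have h2 := (div_le_iff₀ hfzx).1 h1
      calc dist (f y) (f x) ≤ etaPow lam θ (t / dist x z) * dist (f z) (f x) := h2
      _ ≤ etaPow lam θ (t / dist x z) * b := mul_le_mul_of_nonneg_left hbz hetapos
    have hd0 : 0 < dist x z := lt_of_lt_of_le (by positivity) hz1
    have hrweq : lam * b * μ ^ (1/θ) / r ^ (1/θ) * t ^ (1/θ)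
        = lam * b * ((t * μ / r) ^ (1/θ)) := by
      rw [Real.div_rpow (by positivity) hr.le, Real.mul_rpow ht.le hμ0.le]
      ring
    rw [hrweq]
    by_cases hc : t * μ < r
    · have hs1 : t / dist x z ≤ t * μ / r := by
        calc t / dist x z ≤ t / (r / μ) :=
          div_le_div_of_nonneg_left ht.le (by positivity) hz1
        _ = t * μ / r := by field_simp
      have hslt : t / dist x z < 1 := lt_of_le_of_lt hs1 (by rwa [div_lt_one hr])
      have heta : etaPow lam θ (t / dist x z) ≤ lam * (t * μ / r) ^ (1/θ) := by
        unfold etaPow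
        rw [if_pos hslt]
        exact mul_le_mul_of_nonneg_left
          (Real.rpow_le_rpow (by positivity) hs1 hθi.le) hlam0.le
      calc dist (f x) (f y) = dist (f y) (f x) := dist_comm _ _
      _ ≤ etaPow lam θ (t / dist x z) * b := h1'
      _ ≤ lam * (t * μ / r) ^ (1/θ) * b := mul_le_mul_of_nonneg_right heta hb0.le
      _ = lam * b * ((t * μ / r) ^ (1/θ)) := by ring
    · push_neg at hc
      have hone : (1:ℝ) ≤ (t * μ / r) ^ (1/θ) := by
        calc (1:ℝ) = 1 ^ (1/θ) := (Real.one_rpow _).symm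
        _ ≤ (t * μ / r) ^ (1/θ) :=
          Real.rpow_le_rpow (by norm_num) ((one_le_div hr).2 hc) hθi.le
      have hbb : dist (f x) (f y) ≤ b := himg x x y hxball hyball
      have hX0 : (0:ℝ) ≤ (t * μ / r) ^ (1/θ) := le_trans zero_le_one hone
      calc dist (f x) (f y) ≤ b := hbb
      _ = b * 1 := (mul_one _).symm
      _ ≤ b * ((t * μ / r) ^ (1/θ)) := mul_le_mul_of_nonneg_left hone hb0.le
      _ = 1 * (b * ((t * μ / r) ^ (1/θ))) := (one_mul _).symm
      _ ≤ lam * (b * ((t * μ / r) ^ (1/θ))) :=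
        mul_le_mul_of_nonneg_right hlam (mul_nonneg hb0.le hX0)
      _ = lam * b * ((t * μ / r) ^ (1/θ)) := by ring
end

section
/- Suppose that (Z,d_Z) is a κ-uniformly perfect metric space with κ > 1 containing at least two points, and let x ∈ Z. Then for any r with 0 < r < 2·diam Z there exists z ∈ Z such that r/μ ≤ d_Z(x,z) < r, where μ = max{8, κ}. -/
open Metric Set

/-- In a `κ`-uniformly perfect metric space `Z` (with at least two
points), for any `x ∈ Z` and any `0 < r < 2 ⬝ diam Z` there is `z ∈ Z` with
`r / μ ≤ d_Z(x, z) < r`, where `μ = max 8 κ`. -/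
theorem exists_point_in_annulus {Z : Type*} [MetricSpace Z] [Nontrivial Z]
    (κ : ℝ) (hκ : 1 < κ) (hZ : UniformlyPerfect Z κ)
    (x : Z) (r : ℝ) (hr : 0 < r)
    (hr' : ENNReal.ofReal r < 2 * EMetric.diam (Set.univ : Set Z)) :
    ∃ z : Z, r / max 8 κ ≤ dist x z ∧ dist x z < r := by
  have hκ0 : (0:ℝ) < κ := lt_trans one_pos hκ
  have hmax : (0:ℝ) < max 8 κ := lt_max_of_lt_left (by norm_num)
  by_cases h : (Set.univ \ ball x r).Nonempty
  · obtain ⟨z, hz1, hz2⟩ := hZ x r hr h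
    refine ⟨z, ?_, ?_⟩
    · have h1 : r / max 8 κ ≤ r / κ :=
        div_le_div_of_nonneg_left hr.le hκ0 (le_max_right _ _)
      have h2 : r / κ ≤ dist z x := by
        simpa [mem_ball, not_lt] using hz2
      rw [dist_comm]; exact h1.trans h2
    · rw [dist_comm]; exact mem_ball.mp hz1
  · -- everything is in the ball
    have hall : ∀ z : Z, dist z x < r := by
      intro z
      by_contra hc
      exact h ⟨z, mem_univ z, by simpa [mem_ball, not_lt] using hc⟩
    -- extract two far-apart points from the diameter bound
    have hdiam : ENNReal.ofReal (r / 2) < EMetric.diam (Set.univ : Set Z) := by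
      have : ENNReal.ofReal r = 2 * ENNReal.ofReal (r / 2) := by
        rw [← ENNReal.ofReal_ofNat, ← ENNReal.ofReal_mul (by norm_num)]
        ring_nf
      rw [this] at hr'
      exact (ENNReal.mul_lt_mul_iff_right (by norm_num) (by norm_num)).mp hr'
    have hex : ∃ a b : Z, r / 2 < dist a b := by
      by_contra hc
      push_neg at hc
      have : EMetric.diam (Set.univ : Set Z) ≤ ENNReal.ofReal (r / 2) := by
        apply EMetric.diam_le
        intro a _ b _
        rw [edist_dist]
        exact ENNReal.ofReal_le_ofReal (hc a b)
      exact absurd hdiam (not_lt.mpr this)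
    obtain ⟨a, b, hab⟩ := hex
    have htri : dist a b ≤ dist a x + dist x b := dist_triangle a x b
    have key : r / 4 ≤ dist x a ∨ r / 4 ≤ dist x b := by
      by_contra hc
      push_neg at hc
      rw [dist_comm x a] at hc
      linarith [hc.1, hc.2, hab, htri]
    have hle : r / max 8 κ ≤ r / 4 := by
      apply div_le_div_of_nonneg_left hr.le (by norm_num)
      exact le_trans (by norm_num) (le_max_left 8 κ)
    rcases key with hk | hk
    · exact ⟨a, hle.trans hk, by rw [dist_comm]; exact hall a⟩
    · exact ⟨b, hle.trans hk, by rw [dist_comm]; exact hall b⟩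
end

section
/- Assume that (Z,d_Z,ν_Z) is Ahlfors Q_Z-regular and (W,d_W,ν_W) is Ahlfors Q_W-regular with Q_Z > 0, Q_W > 0. Let θ₁ > 0, θ₂ > 0 and 0 < r < 2·diam Z, and suppose f : Z → W is a locally (θ₁,θ₂,r)-biHölder continuous homeomorphism such that Q_Z ≥ θ₁ Q_W. Then for any p ≥ 1 there is a constant C > 0 (depending only on the data) such that for every u ∈ L^p(W), ∫_Z |u(f(x))|^p dν_Z(x) ≤ C ∫_W |u(w)|^p dν_W(w); i.e. f induces a bounded embedding f_# : L^p(W) → L^p(Z) via composition. -/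
/-!
The composition operator is controlled by the push-forward measure: it suffices to show
`f_* ν_Z ≤ K ν_W`. Cut `Z` into countably many Borel pieces `A` of diameter `< r`
(Ahlfors-regular spaces are separable). On such a piece the lower Hölder bound shows that
`A ∩ f⁻¹ B(w, T)` lies in a ball of radius `≈ T^{1/θ₁}`, so its `ν_Z`-measure is
`≲ T^{Q_Z/θ₁} ≤ T^{Q_W} ≈ ν_W(B(w, T))` for small `T`, which is where `Q_Z ≥ θ₁ Q_W` enters.
A Vitali covering argument turns this comparison on small balls into
`f_* (ν_Z|_A) ≤ K ν_W`, and summing over the pieces (whose images are disjoint) gives the claim.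
-/

open Metric Set MeasureTheory ENNReal

/-- `(Z, d_Z, ν)` is Ahlfors `Q`-regular: there is `C ≥ 1` with
`C⁻¹ r^Q ≤ ν(B(z, r)) ≤ C r^Q` for all `z ∈ Z` and `0 < r < 2 ⬝ diam Z`. -/
def AhlforsRegular {Z : Type*} [MetricSpace Z] [MeasurableSpace Z]
    (ν : Measure Z) (Q : ℝ) : Prop :=
  ∃ C : ℝ, 1 ≤ C ∧ ∀ (z : Z) (r : ℝ), 0 < r →
    ENNReal.ofReal r < 2 * EMetric.diam (Set.univ : Set Z) →
      ENNReal.ofReal (C⁻¹ * r ^ Q) ≤ ν (ball z r) ∧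
      ν (ball z r) ≤ ENNReal.ofReal (C * r ^ Q)

open TopologicalSpace Function

theorem ENNReal.exists_pos_ofReal_lt {a : ℝ≥0∞} (ha : 0 < a) :
    ∃ t : ℝ, 0 < t ∧ ENNReal.ofReal t < a := by
  obtain ⟨t, -, ht0, hta⟩ := ENNReal.lt_iff_exists_real_btwn.1 ha
  exact ⟨t, ENNReal.ofReal_pos.1 ht0, hta⟩

/-- A maximal `ε`-separated set is an `ε`-net; the disjoint balls of radius `ε / 2` around its
points have positive measure, so there are only countably many of them. -/
theorem secondCountableTopology_of_isOpenPosMeasure {X : Type*} [MetricSpace X]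
    [MeasurableSpace X] [OpensMeasurableSpace X] (μ : Measure X) [SFinite μ]
    [μ.IsOpenPosMeasure] : SecondCountableTopology X := by
  refine secondCountable_of_almost_dense_set fun ε hε => ?_
  lift ε to NNReal using hε.le
  obtain ⟨N, hN⟩ : ∃ N : Set X, Maximal (fun N ↦ N ⊆ univ ∧ IsSeparated ε N) N := by
    refine zorn_subset _ fun c hcS hc =>
      ⟨⋃₀ c, ⟨subset_univ _, ?_⟩, fun s hs => subset_sUnion_of_mem hs⟩
    exact (pairwise_sUnion hc.directedOn).2 fun s hs => (hcS hs).2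
  refine ⟨N, ?_, fun x => ?_⟩
  · have hdisj : Pairwise (Disjoint on fun y : N => ball (y : X) (ε / 2)) := by
      intro y z hyz
      refine ball_disjoint_ball ?_
      have hsep : (ε : ℝ≥0∞) < edist (y : X) z :=
        hN.prop.2 y.2 z.2 (Subtype.coe_injective.ne hyz)
      rw [edist_nndist, ENNReal.coe_lt_coe, ← NNReal.coe_lt_coe, coe_nndist] at hsep
      linarith
    have := Measure.countable_meas_pos_of_disjoint_iUnion (μ := μ)
      (fun y : N => measurableSet_ball) hdisj
    simp only [measure_ball_pos μ _ (half_pos hε), ofPred_true, countable_univ_iff] at this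
    exact countable_coe_iff.1 this
  · simpa using (isCover_iff_subset_iUnion_closedBall.1 (IsCover.of_maximal_isSeparated hN))
      (mem_univ x)

namespace AhlforsRegular

variable {X : Type*} [MetricSpace X] [MeasurableSpace X] {ν : Measure X} {Q : ℝ}

theorem exists_bounds_of_le (h : AhlforsRegular ν Q) {R : ℝ}
    (hR : ENNReal.ofReal R < 2 * ediam (univ : Set X)) :
    ∃ C : ℝ, 1 ≤ C ∧ ∀ (x : X) (s : ℝ), 0 < s → s ≤ R →
      ENNReal.ofReal (C⁻¹ * s ^ Q) ≤ ν (ball x s) ∧ ν (ball x s) ≤ ENNReal.ofReal (C * s ^ Q) :=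
  let ⟨C, hC, hball⟩ := h
  ⟨C, hC, fun x s hs hsR => hball x s hs ((ENNReal.ofReal_le_ofReal hsR).trans_lt hR)⟩

theorem measure_ball_lt_top (h : AhlforsRegular ν Q) (hX : 0 < ediam (univ : Set X))
    (x : X) (s : ℝ) : ν (ball x s) < ∞ := by
  obtain ⟨C, -, hball⟩ := h
  obtain ⟨t, ht, hst, htX⟩ : ∃ t, 0 < t ∧ ball x s ⊆ ball x t ∧
      ENNReal.ofReal t < 2 * ediam (univ : Set X) := by
    rcases eq_top_or_lt_top (ediam (univ : Set X)) with htop | hfin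
    · exact ⟨max s 1, by positivity, ball_subset_ball (le_max_left _ _), by simp [htop]⟩
    · have hD : 0 < diam (univ : Set X) := ENNReal.toReal_pos hX.ne' hfin.ne
      refine ⟨3 / 2 * diam (univ : Set X), by positivity, fun y _ => mem_ball.2 ?_, ?_⟩
      · have := dist_le_diam_of_mem (isBounded_iff_ediam_ne_top.2 hfin.ne) (mem_univ y)
          (mem_univ x)
        linarith
      · rw [← ENNReal.ofReal_toReal hfin.ne, ← ENNReal.ofReal_ofNat 2,
          ← ENNReal.ofReal_mul zero_le_two, ENNReal.ofReal_lt_ofReal_iff (by positivity)]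
        change 3 / 2 * diam (univ : Set X) < 2 * diam (univ : Set X)
        linarith
  exact (measure_mono hst).trans_lt ((hball x t ht htX).2.trans_lt ofReal_lt_top)

theorem isLocallyFiniteMeasure (h : AhlforsRegular ν Q) (hX : 0 < ediam (univ : Set X)) :
    IsLocallyFiniteMeasure ν :=
  ⟨fun x => ⟨ball x 1, ball_mem_nhds x one_pos, h.measure_ball_lt_top hX x 1⟩⟩

theorem sigmaFinite (h : AhlforsRegular ν Q) (hX : 0 < ediam (univ : Set X)) : SigmaFinite ν :=
  let ⟨x, _⟩ := (ediam_pos_iff.1 hX).nonempty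
  ⟨⟨⟨fun n => ball x n, fun _ => trivial, fun n => h.measure_ball_lt_top hX x n,
    iUnion_ball_nat x⟩⟩⟩

theorem isOpenPosMeasure (h : AhlforsRegular ν Q) (hX : 0 < ediam (univ : Set X)) :
    ν.IsOpenPosMeasure := by
  refine ⟨fun U hU ⟨x, hx⟩ => ?_⟩
  obtain ⟨δ, hδ, hδU⟩ := isOpen_iff.1 hU x hx
  obtain ⟨R, hR, hRX⟩ := exists_pos_ofReal_lt (mul_pos two_ne_zero hX.ne')
  obtain ⟨C, hC, hball⟩ := h.exists_bounds_of_le hRX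
  have hs : 0 < min δ R := lt_min hδ hR
  refine (lt_of_lt_of_le ?_ ((hball x _ hs (min_le_right _ _)).1.trans
    (measure_mono ((ball_subset_ball (min_le_left _ _)).trans hδU)))).ne'
  exact ENNReal.ofReal_pos.2 (by positivity)

theorem secondCountableTopology [OpensMeasurableSpace X] (h : AhlforsRegular ν Q)
    (hX : 0 < ediam (univ : Set X)) : SecondCountableTopology X :=
  have := h.sigmaFinite hX
  have := h.isOpenPosMeasure hX
  secondCountableTopology_of_isOpenPosMeasure ν

end AhlforsRegular

/-- The factor `4` is the enlargement factor of the Vitali covering lemma. -/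
theorem MeasureTheory.Measure.le_smul_of_measure_closedBall_le {X : Type*} [MetricSpace X]
    [MeasurableSpace X] [OpensMeasurableSpace X] [SeparableSpace X] {μ ν : Measure X}
    [ν.OuterRegular] {K : ℝ≥0∞} (hK : K ≠ ∞) {R : ℝ} (hR : 0 < R)
    (h : ∀ x T, 0 < T → T ≤ R → μ (closedBall x (4 * T)) ≤ K * ν (closedBall x T)) :
    μ ≤ K • ν := by
  have hopen : ∀ E U, E ⊆ U → IsOpen U → μ E ≤ K * ν U := by
    intro E U hEU hU
    set t : Set (X × ℝ) := {q | q.1 ∈ E ∧ 0 < q.2 ∧ q.2 ≤ R ∧ closedBall q.1 q.2 ⊆ U}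
    obtain ⟨u, hut, hdisj, hcov⟩ :=
      Vitali.exists_disjoint_subfamily_covering_enlargement_closedBall t Prod.fst Prod.snd R
        (fun q hq => hq.2.2.1) 4 (by norm_num)
    have hu : u.Countable := hdisj.countable_of_nonempty_interior fun q hq =>
      ⟨q.1, mem_interior_iff_mem_nhds.2 (closedBall_mem_nhds _ (hut hq).2.1)⟩
    have hEu : E ⊆ ⋃ q ∈ u, closedBall q.1 (4 * q.2) := by
      intro x hx
      obtain ⟨δ, hδ, hδU⟩ := isOpen_iff.1 hU x (hEU hx)
      have hs : 0 < min (δ / 2) R := lt_min (half_pos hδ) hR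
      have hxt : (x, min (δ / 2) R) ∈ t := ⟨hx, hs, min_le_right _ _,
        (closedBall_subset_ball ((min_le_left _ _).trans_lt (half_lt_self hδ))).trans hδU⟩
      obtain ⟨q, hqu, hxq⟩ := hcov _ hxt
      exact mem_biUnion hqu (hxq (mem_closedBall_self hs.le))
    calc μ E ≤ ∑' q : u, μ (closedBall q.1.1 (4 * q.1.2)) :=
          (measure_mono hEu).trans (measure_biUnion_le μ hu _)
      _ ≤ ∑' q : u, K * ν (closedBall q.1.1 q.1.2) :=
          ENNReal.tsum_le_tsum fun q => h _ _ (hut q.2).2.1 (hut q.2).2.2.1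
      _ = K * ν (⋃ q ∈ u, closedBall q.1 q.2) := by
          rw [ENNReal.tsum_mul_left, measure_biUnion hu hdisj fun _ _ => measurableSet_closedBall]
      _ ≤ K * ν U := by
          gcongr
          exact iUnion₂_subset fun q hq => (hut hq).2.2.2
  have := Measure.OuterRegular.smul ν hK
  refine Measure.le_iff'.2 fun E => ?_
  rw [E.measure_eq_iInf_isOpen (K • ν)]
  exact le_iInf₂ fun U hEU => le_iInf fun hU => (hopen E U hEU hU).trans_eq rfl

theorem MeasurableEquiv.map_le_smul_of_map_restrict_le {α β ι : Type*} [MeasurableSpace α]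
    [MeasurableSpace β] [Countable ι] (e : α ≃ᵐ β) {μ : Measure α} {ν : Measure β} {c : ℝ≥0∞}
    {A : ι → Set α} (hAm : ∀ i, MeasurableSet (A i)) (hAd : Pairwise (Disjoint on A))
    (hA : ⋃ i, A i = univ) (h : ∀ i, (μ.restrict (A i)).map e ≤ c • ν) :
    μ.map e ≤ c • ν := by
  refine Measure.le_iff.2 fun E hE => ?_
  -- testing the bound for `A i` on `E ∩ e (A i)` localizes it to the disjoint pieces `e (A i)`
  have hpiece : ∀ i, μ (e ⁻¹' E ∩ A i) ≤ c * ν (E ∩ e.symm ⁻¹' A i) := fun i => by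
    have := Measure.le_iff.1 (h i) _ (hE.inter ((hAm i).preimage e.symm.measurable))
    rwa [e.map_apply, Measure.restrict_apply' (hAm i), preimage_inter, e.preimage_symm,
      e.preimage_image, inter_assoc, inter_self, Measure.smul_apply, smul_eq_mul,
      ← e.preimage_symm] at this
  calc μ.map e E = ∑' i, μ (e ⁻¹' E ∩ A i) := by
        rw [e.map_apply, ← measure_iUnion (fun i j hij => (hAd hij).mono inter_subset_right
          inter_subset_right) fun i => (e.measurable hE).inter (hAm i), ← inter_iUnion, hA,
          inter_univ]
    _ ≤ ∑' i, c * ν (E ∩ e.symm ⁻¹' A i) := ENNReal.tsum_le_tsum hpiece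
    _ = (c • ν) E := by
        rw [ENNReal.tsum_mul_left, ← measure_iUnion (fun i j hij => ((hAd hij).preimage _).mono
          inter_subset_right inter_subset_right) fun i =>
          hE.inter ((hAm i).preimage e.symm.measurable), ← inter_iUnion, ← preimage_iUnion, hA,
          preimage_univ, inter_univ, Measure.smul_apply, smul_eq_mul]

section LowerHolder

variable {Z W : Type*} [MetricSpace Z] [MeasurableSpace Z] [MetricSpace W] {f : Z → W}
  {A : Set Z} {θ Cf : ℝ}

theorem measure_inter_preimage_closedBall_le {ν : Measure Z} {Q C R : ℝ} (hθ : 0 < θ)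
    (hCf : 0 < Cf) (hf : ∀ x ∈ A, ∀ y ∈ A, Cf⁻¹ * dist x y ^ θ ≤ dist (f x) (f y))
    (hball : ∀ (z : Z) (s : ℝ), 0 < s → s ≤ R → ν (ball z s) ≤ ENNReal.ofReal (C * s ^ Q))
    (hR : 0 ≤ R) (w : W) {T : ℝ} (hT : 0 < T) (hTR : 4 * Cf * T ≤ R ^ θ) :
    ν (f ⁻¹' closedBall w T ∩ A) ≤ ENNReal.ofReal (C * (4 * Cf * T) ^ (Q / θ)) := by
  rcases (f ⁻¹' closedBall w T ∩ A).eq_empty_or_nonempty with hempty | ⟨z₀, hz₀, hz₀A⟩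
  · simp [hempty]
  have hsub : f ⁻¹' closedBall w T ∩ A ⊆ ball z₀ ((4 * Cf * T) ^ θ⁻¹) := by
    rintro z ⟨hz, hzA⟩
    have hfz : dist (f z) (f z₀) ≤ 2 * T := (dist_triangle_right _ _ w).trans
      (by linarith [mem_closedBall.1 hz, mem_closedBall.1 hz₀])
    have hzz₀ : dist z z₀ ^ θ ≤ Cf * (2 * T) :=
      (inv_mul_le_iff₀ hCf).1 ((hf z hzA z₀ hz₀A).trans hfz)
    rw [mem_ball, Real.lt_rpow_inv_iff_of_pos dist_nonneg (by positivity) hθ]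
    nlinarith
  calc ν (f ⁻¹' closedBall w T ∩ A) ≤ ν (ball z₀ ((4 * Cf * T) ^ θ⁻¹)) := measure_mono hsub
    _ ≤ ENNReal.ofReal (C * ((4 * Cf * T) ^ θ⁻¹) ^ Q) := hball z₀ _ (by positivity)
        ((Real.rpow_inv_le_iff_of_pos (by positivity) hR hθ).2 hTR)
    _ = ENNReal.ofReal (C * (4 * Cf * T) ^ (Q / θ)) := by
        rw [← Real.rpow_mul (by positivity), inv_mul_eq_div]

variable [MeasurableSpace W] [OpensMeasurableSpace W] [SeparableSpace W]

theorem AhlforsRegular.exists_map_restrict_le_smul {νZ : Measure Z} {νW : Measure W}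
    [νW.OuterRegular] {QZ QW : ℝ} (hAZ : AhlforsRegular νZ QZ) (hAW : AhlforsRegular νW QW)
    (hW : 0 < ediam (univ : Set W)) (hθ : 0 < θ) (hQ : θ * QW ≤ QZ) {r : ℝ} (hr : 0 < r)
    (hr' : ENNReal.ofReal r < 2 * ediam (univ : Set Z)) (hfm : Measurable f) (hCf : 0 < Cf) :
    ∃ K : ℝ, 0 < K ∧ ∀ A : Set Z, (∀ x ∈ A, ∀ y ∈ A, Cf⁻¹ * dist x y ^ θ ≤ dist (f x) (f y)) →
      (νZ.restrict A).map f ≤ ENNReal.ofReal K • νW := by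
  obtain ⟨CZ, hCZ, hZ⟩ := hAZ.exists_bounds_of_le hr'
  obtain ⟨ρ, hρ, hρW⟩ := exists_pos_ofReal_lt (mul_pos two_ne_zero hW.ne')
  obtain ⟨CW, hCW, hWb⟩ := hAW.exists_bounds_of_le hρW
  have hQ' : QW ≤ QZ / θ := (le_div_iff₀ hθ).2 (by linarith)
  refine ⟨CZ * (16 * Cf) ^ (QZ / θ) * CW, by positivity, fun A hA => ?_⟩
  refine Measure.le_smul_of_measure_closedBall_le ofReal_ne_top
    (R := min (min 1 ρ) (r ^ θ / (16 * Cf))) (by positivity) fun w T hT hTR => ?_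
  have hT1 : T ≤ 1 := hTR.trans ((min_le_left _ _).trans (min_le_left _ _))
  have hTρ : T ≤ ρ := hTR.trans ((min_le_left _ _).trans (min_le_right _ _))
  have hTr : 4 * Cf * (4 * T) ≤ r ^ θ := by
    have := hTR.trans (min_le_right _ _)
    rw [le_div_iff₀ (by positivity)] at this
    linarith
  rw [Measure.map_apply hfm measurableSet_closedBall,
    Measure.restrict_apply (hfm measurableSet_closedBall)]
  calc νZ (f ⁻¹' closedBall w (4 * T) ∩ A)
      ≤ ENNReal.ofReal (CZ * (4 * Cf * (4 * T)) ^ (QZ / θ)) :=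
        measure_inter_preimage_closedBall_le hθ hCf hA (fun z s hs hsr => (hZ z s hs hsr).2)
          hr.le w (by positivity) hTr
    _ ≤ ENNReal.ofReal (CZ * (16 * Cf) ^ (QZ / θ) * CW) * ENNReal.ofReal (CW⁻¹ * T ^ QW) := by
        rw [← ENNReal.ofReal_mul (by positivity)]
        refine ENNReal.ofReal_le_ofReal ?_
        calc CZ * (4 * Cf * (4 * T)) ^ (QZ / θ) = CZ * (16 * Cf) ^ (QZ / θ) * T ^ (QZ / θ) := by
              rw [show 4 * Cf * (4 * T) = 16 * Cf * T by ring,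
                Real.mul_rpow (by positivity) hT.le, mul_assoc]
          _ ≤ CZ * (16 * Cf) ^ (QZ / θ) * T ^ QW :=
              mul_le_mul_of_nonneg_left (Real.rpow_le_rpow_of_exponent_ge hT hT1 hQ')
                (by positivity)
          _ = CZ * (16 * Cf) ^ (QZ / θ) * CW * (CW⁻¹ * T ^ QW) := by
              field_simp
    _ ≤ ENNReal.ofReal (CZ * (16 * Cf) ^ (QZ / θ) * CW) * νW (closedBall w T) := by
        gcongr
        exact (hWb w T hT hTρ).1.trans (measure_mono ball_subset_closedBall)

end LowerHolder

theorem lp_embedding_of_locally_biHolder_general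
    {Z W : Type*} [MetricSpace Z] [MeasurableSpace Z] [BorelSpace Z]
    [MetricSpace W] [MeasurableSpace W] [BorelSpace W]
    (νZ : Measure Z) (νW : Measure W)
    (QZ QW : ℝ)
    (hAZ : AhlforsRegular νZ QZ) (hAW : AhlforsRegular νW QW)
    (θ₁ θ₂ : ℝ) (hθ₁ : 0 < θ₁)
    (r : ℝ) (hr : 0 < r) (hr' : ENNReal.ofReal r < 2 * EMetric.diam (Set.univ : Set Z))
    (f : Z ≃ₜ W)
    (hf : ∃ Cf : ℝ, 1 ≤ Cf ∧ ∀ x y : Z, dist x y < r →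
      Cf⁻¹ * dist x y ^ θ₁ ≤ dist (f x) (f y) ∧ dist (f x) (f y) ≤ Cf * dist x y ^ θ₂)
    (hQ : θ₁ * QW ≤ QZ) (p : ℝ) :
    ∃ C : ℝ, 0 < C ∧ ∀ u : W → ℝ, MemLp u (ENNReal.ofReal p) νW →
      ∫⁻ x, ENNReal.ofReal (|u (f x)| ^ p) ∂νZ ≤
        ENNReal.ofReal C * ∫⁻ w, ENNReal.ofReal (|u w| ^ p) ∂νW := by
  obtain ⟨Cf, hCf, hf⟩ := hf
  have hZ : 0 < ediam (univ : Set Z) := (ENNReal.mul_pos_iff.1 (bot_le.trans_lt hr')).2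
  have : Nontrivial Z := nontrivial_univ_iff.1 (ediam_pos_iff.1 hZ)
  have hW : 0 < ediam (univ : Set W) :=
    ediam_pos_iff.2 (nontrivial_univ_iff.2 f.injective.nontrivial)
  have := hAZ.secondCountableTopology hZ
  have := hAW.secondCountableTopology hW
  -- with second countability, local finiteness makes `νW` outer regular
  have := hAW.isLocallyFiniteMeasure hW
  obtain ⟨K, hK, hloc⟩ := hAZ.exists_map_restrict_le_smul hAW hW hθ₁ hQ hr hr'
    f.continuous.measurable (zero_lt_one.trans_le hCf)
  obtain ⟨A, hAm, hAb, hAdiam, hAU, hAd⟩ :=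
    SeparableSpace.exists_measurable_partition_diam_le Z (half_pos hr)
  have hmap : νZ.map f ≤ ENNReal.ofReal K • νW :=
    f.toMeasurableEquiv.map_le_smul_of_map_restrict_le hAm hAd hAU fun n => hloc (A n)
      fun x hx y hy => (hf x y ((dist_le_diam_of_mem (hAb n) hx hy).trans_lt
        ((hAdiam n).trans_lt (half_lt_self hr)))).1
  refine ⟨K, hK, fun u _ => ?_⟩
  calc ∫⁻ x, ENNReal.ofReal (|u (f x)| ^ p) ∂νZ
      = ∫⁻ w, ENNReal.ofReal (|u w| ^ p) ∂νZ.map f :=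
        (lintegral_map_equiv (fun w => ENNReal.ofReal (|u w| ^ p)) f.toMeasurableEquiv).symm
    _ ≤ ∫⁻ w, ENNReal.ofReal (|u w| ^ p) ∂(ENNReal.ofReal K • νW) := lintegral_mono' hmap le_rfl
    _ = ENNReal.ofReal K * ∫⁻ w, ENNReal.ofReal (|u w| ^ p) ∂νW := lintegral_smul_measure _ _

/-- Let `(Z, νZ)` be Ahlfors `Q_Z`-regular and `(W, νW)` be Ahlfors
`Q_W`-regular (`Q_Z, Q_W > 0`), let `θ₁, θ₂ > 0` and `0 < r < 2 ⬝ diam Z`, and suppose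
`f : Z → W` is a locally `(θ₁, θ₂, r)`-biHölder continuous homeomorphism with
`Q_Z ≥ θ₁ Q_W`. Then for any `p ≥ 1` there is `C > 0` such that for every `u ∈ L^p(W)`,
`∫_Z |u(f(x))|^p dνZ(x) ≤ C ∫_W |u(w)|^p dνW(w)`; i.e. `f` induces a bounded embedding
`f_# : L^p(W) → L^p(Z)` via composition. -/
theorem lp_embedding_of_locally_biHolder
    {Z W : Type*} [MetricSpace Z] [MeasurableSpace Z] [BorelSpace Z]
    [MetricSpace W] [MeasurableSpace W] [BorelSpace W]
    (νZ : Measure Z) (νW : Measure W)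
    (QZ QW : ℝ) (hQZ : 0 < QZ) (hQW : 0 < QW)
    (hAZ : AhlforsRegular νZ QZ) (hAW : AhlforsRegular νW QW)
    (θ₁ θ₂ : ℝ) (hθ₁ : 0 < θ₁) (hθ₂ : 0 < θ₂)
    (r : ℝ) (hr : 0 < r) (hr' : ENNReal.ofReal r < 2 * EMetric.diam (Set.univ : Set Z))
    (f : Z ≃ₜ W)
    (hf : ∃ Cf : ℝ, 1 ≤ Cf ∧ ∀ x y : Z, dist x y < r →
      Cf⁻¹ * dist x y ^ θ₁ ≤ dist (f x) (f y) ∧ dist (f x) (f y) ≤ Cf * dist x y ^ θ₂)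
    (hQ : θ₁ * QW ≤ QZ) (p : ℝ) (hp : 1 ≤ p) :
    ∃ C : ℝ, 0 < C ∧ ∀ u : W → ℝ, MemLp u (ENNReal.ofReal p) νW →
      ∫⁻ x, ENNReal.ofReal (|u (f x)| ^ p) ∂νZ ≤
        ENNReal.ofReal C * ∫⁻ w, ENNReal.ofReal (|u w| ^ p) ∂νW :=
  lp_embedding_of_locally_biHolder_general νZ νW QZ QW hAZ hAW θ₁ θ₂ hθ₁ r hr hr' f hf hQ p
end

section
/- Suppose that (Z,d_Z) is κ-uniformly perfect with κ > 1 and that f : (Z,d_Z) → (W,d_W) is a (θ,λ)-power quasisymmetric homeomorphism with θ ≥ 1 and λ ≥ 1 which is r-uniformly bounded for some 0 < r < 2·diam Z, with constants 0 < a < b such that a ≤ diam f(B(ξ,r)) ≤ b for all ξ ∈ Z. Then for every x ∈ Z and every ζ ∈ Z with r/μ ≤ d_Z(x,ζ) < r, where μ = max{8,κ}, one has a/(3λμ^θ) ≤ d_W(f(x),f(ζ)) ≤ b. -/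
open Metric Set

/-- Let `Z` be `κ`-uniformly perfect (`κ > 1`) and let `f : Z → W` be a
`(θ, λ)`-power quasisymmetric homeomorphism (`θ ≥ 1`, `λ ≥ 1`) which is `r`-uniformly
bounded for some `0 < r < 2 ⬝ diam Z`, with constants `0 < a < b` such that
`a ≤ diam f(B(ξ, r)) ≤ b` for all `ξ ∈ Z`. Then for every `x ∈ Z` and every `ζ ∈ Z` with
`r/μ ≤ d_Z(x, ζ) < r`, where `μ = max 8 κ`, one has
`a / (3 λ μ^θ) ≤ d_W(f(x), f(ζ)) ≤ b`. -/
theorem dist_image_bounds {Z W : Type*} [MetricSpace Z] [MetricSpace W]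
    (κ : ℝ) (hκ : 1 < κ) (hZ : UniformlyPerfect Z κ)
    (θ lam : ℝ) (hθ : 1 ≤ θ) (hlam : 1 ≤ lam)
    (f : Z ≃ₜ W)
    (hqs : ∀ x y z : Z, y ≠ z →
      dist (f x) (f z) / dist (f y) (f z) ≤ etaPow lam θ (dist x z / dist y z))
    (r : ℝ) (hr : 0 < r) (hr' : ENNReal.ofReal r < 2 * EMetric.diam (Set.univ : Set Z))
    (a b : ℝ) (ha : 0 < a) (hab : a < b)
    (hub : ∀ ξ : Z, ENNReal.ofReal a ≤ EMetric.diam (f '' ball ξ r) ∧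
      EMetric.diam (f '' ball ξ r) ≤ ENNReal.ofReal b) :
    ∀ x ζ : Z, r / max 8 κ ≤ dist x ζ → dist x ζ < r →
      a / (3 * lam * (max 8 κ) ^ θ) ≤ dist (f x) (f ζ) ∧ dist (f x) (f ζ) ≤ b := by
  intro x ζ h1 h2
  set μ := max 8 κ with hμdef
  have hμ1 : (1:ℝ) < μ := lt_of_lt_of_le (by norm_num) (le_max_left _ _)
  have hμ0 : (0:ℝ) < μ := by linarith
  have hμθ1 : (1:ℝ) ≤ μ ^ θ := Real.one_le_rpow hμ1.le (by linarith)
  have hμθ0 : (0:ℝ) < μ ^ θ := by linarith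
  have hxζ : x ≠ ζ := by
    intro h
    have : 0 < r / μ := div_pos hr hμ0
    rw [h, dist_self] at h1; linarith
  have hdpos : 0 < dist (f x) (f ζ) := by
    rw [dist_pos]; exact fun h => hxζ (f.injective h)
  constructor
  · -- lower bound
    -- find y in ball x r with dist (f x) (f y) > a/3
    obtain ⟨u, hu, v, hv, huv⟩ :
        ∃ u ∈ ball x r, ∃ v ∈ ball x r, 2*a/3 < dist (f u) (f v) := by
      by_contra hcon
      push_neg at hcon
      have : EMetric.diam (f '' ball x r) ≤ ENNReal.ofReal (2*a/3) := by
        refine Metric.ediam_le_iff.2 ?_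
        rintro p ⟨u, hu, rfl⟩ q ⟨v, hv, rfl⟩
        exact (edist_le_ofReal (by linarith)).2 (hcon u hu v hv)
      have h := le_trans (hub x).1 this
      rw [ENNReal.ofReal_le_ofReal_iff (by linarith)] at h
      linarith
    have htri : dist (f u) (f v) ≤ dist (f x) (f u) + dist (f x) (f v) :=
      dist_triangle_left _ _ _
    have : a/3 < dist (f x) (f u) ∨ a/3 < dist (f x) (f v) := by
      by_contra hc; push_neg at hc; linarith [hc.1, hc.2]
    obtain ⟨y, hy, hay⟩ : ∃ y ∈ ball x r, a/3 < dist (f x) (f y) := by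
      rcases this with h | h
      · exact ⟨u, hu, h⟩
      · exact ⟨v, hv, h⟩
    have hζx : ζ ≠ x := fun h => hxζ h.symm
    have hq := hqs y ζ x hζx
    have hdζx : 0 < dist ζ x := dist_pos.2 hζx
    have hdζx' : r / μ ≤ dist ζ x := by rwa [dist_comm]
    have ht : dist y x / dist ζ x < μ := by
      have hyx : dist y x < r := mem_ball.1 hy
      have h1' : r / μ ≤ dist ζ x := hdζx'
      rw [div_lt_iff₀ hdζx]
      nlinarith [div_mul_cancel₀ r hμ0.ne', mul_le_mul_of_nonneg_left hdζx' hμ0.le]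
    have hη : etaPow lam θ (dist y x / dist ζ x) ≤ lam * μ ^ θ := by
      unfold etaPow
      split_ifs with hlt
      · have h01 : (0:ℝ) ≤ dist y x / dist ζ x := by positivity
        have := Real.rpow_le_one h01 hlt.le (by positivity : (0:ℝ) ≤ 1/θ)
        nlinarith
      · push_neg at hlt
        have := Real.rpow_le_rpow (by positivity : (0:ℝ) ≤ dist y x / dist ζ x)
          ht.le (by linarith : (0:ℝ) ≤ θ)
        nlinarith
    have hq' : dist (f y) (f x) ≤ lam * μ ^ θ * dist (f ζ) (f x) := by
      have hd0 : 0 < dist (f ζ) (f x) := by rwa [dist_comm]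
      have := le_trans hq hη
      rwa [div_le_iff₀ hd0] at this
    have hfx : dist (f x) (f y) = dist (f y) (f x) := dist_comm _ _
    have hfz : dist (f ζ) (f x) = dist (f x) (f ζ) := dist_comm _ _
    rw [hfx] at hay; rw [hfz] at hq'
    rw [div_le_iff₀ (by positivity : (0:ℝ) < 3 * lam * μ ^ θ)]
    nlinarith
  · -- upper bound
    have hx : f x ∈ f '' ball x r := ⟨x, mem_ball_self hr, rfl⟩
    have hζ : f ζ ∈ f '' ball x r := ⟨ζ, by rwa [mem_ball, dist_comm], rfl⟩
    have := le_trans (EMetric.edist_le_diam_of_mem hx hζ) (hub x).2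
    exact (edist_le_ofReal (by linarith)).1 this
end

section
/- Let f : ℝ² → ℝ² be the radial stretching f(x) = ‖x‖·x (where ‖·‖ is the Euclidean norm). Then f is not locally (θ₁,θ₂,r)-biHölder continuous for any θ₁ > 0, θ₂ > 0 and r > 0; that is, for all θ₁, θ₂, r > 0 and every C ≥ 1 there exist x, y ∈ ℝ² with ‖x−y‖ < r such that the inequalities C⁻¹‖x−y‖^{θ₁} ≤ ‖f(x)−f(y)‖ ≤ C‖x−y‖^{θ₂} fail. -/
open Metric Set

/-- The radial stretching `f(x) = ‖x‖ ⬝ x` of the Euclidean plane is not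
locally `(θ₁, θ₂, r)`-biHölder continuous for any `θ₁ > 0`, `θ₂ > 0` and `r > 0`: for
every `C ≥ 1` there exist points `x, y` with `‖x - y‖ < r` violating the biHölder
inequalities. -/
theorem radial_stretching_not_locally_biHolder
    (f : EuclideanSpace ℝ (Fin 2) → EuclideanSpace ℝ (Fin 2))
    (hf : ∀ x, f x = ‖x‖ • x) :
    ∀ θ₁ θ₂ r : ℝ, 0 < θ₁ → 0 < θ₂ → 0 < r → ∀ C : ℝ, 1 ≤ C →
      ∃ x y : EuclideanSpace ℝ (Fin 2), dist x y < r ∧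
        ¬ (C⁻¹ * dist x y ^ θ₁ ≤ dist (f x) (f y) ∧
            dist (f x) (f y) ≤ C * dist x y ^ θ₂) := by
  intro θ₁ θ₂ r hθ₁ hθ₂ hr C hC
  have hC0 : (0:ℝ) < C := lt_of_lt_of_le one_pos hC
  set b : ℝ := r / 4 with hb
  have hb0 : 0 < b := by positivity
  set a : ℝ := 2 * C * (r/2) ^ θ₂ / r + 1 with ha
  have ha0 : 0 < a := by positivity
  set x : EuclideanSpace ℝ (Fin 2) := (WithLp.equiv 2 (Fin 2 → ℝ)).symm ![a, b] with hx
  set y : EuclideanSpace ℝ (Fin 2) := (WithLp.equiv 2 (Fin 2 → ℝ)).symm ![a, -b] with hy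
  have hx0 : x 0 = a := rfl
  have hx1 : x 1 = b := rfl
  have hy0 : y 0 = a := rfl
  have hy1 : y 1 = -b := rfl
  set s : ℝ := Real.sqrt (a^2 + b^2) with hs
  have hsa : a ≤ s := by
    rw [hs]
    nlinarith [Real.sq_sqrt (by positivity : (0:ℝ) ≤ a^2 + b^2),
      Real.sqrt_nonneg (a^2 + b^2), sq_nonneg (Real.sqrt (a^2+b^2) - a)]
  have hnx : ‖x‖ = s := by
    rw [EuclideanSpace.norm_eq, Fin.sum_univ_two, hx0, hx1]
    simp [Real.norm_eq_abs, sq_abs]; rfl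
  have hny : ‖y‖ = s := by
    rw [EuclideanSpace.norm_eq, Fin.sum_univ_two, hy0, hy1]
    simp [Real.norm_eq_abs, sq_abs]; rfl
  have hdxy : dist x y = r / 2 := by
    rw [dist_eq_norm, EuclideanSpace.norm_eq, Fin.sum_univ_two]
    have h0 : (x - y) 0 = 0 := by simp [PiLp.sub_apply, hx0, hy0]
    have h1 : (x - y) 1 = 2 * b := by simp [PiLp.sub_apply, hx1, hy1]; ring
    rw [h0, h1]
    rw [show ‖(0:ℝ)‖^2 + ‖2*b‖^2 = (2*b)^2 by
      simp [Real.norm_eq_abs, sq_abs, abs_of_pos hb0]]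
    rw [Real.sqrt_sq (by positivity)]
    rw [hb]; ring
  have hdf : dist (f x) (f y) = s * (r / 2) := by
    rw [hf, hf, hnx, hny, dist_eq_norm, ← smul_sub, norm_smul,
      Real.norm_eq_abs, abs_of_nonneg (Real.sqrt_nonneg _), ← dist_eq_norm, hdxy]
  refine ⟨x, y, by rw [hdxy]; linarith, ?_⟩
  rintro ⟨-, h2⟩
  rw [hdf, hdxy] at h2
  have hkey : C * (r/2) ^ θ₂ + r/2 ≤ C * (r/2) ^ θ₂ := by
    calc C * (r/2) ^ θ₂ + r/2 = (2 * C * (r/2) ^ θ₂ / r + 1) * (r/2) := by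
          field_simp
      _ = a * (r/2) := by rw [ha]
      _ ≤ s * (r/2) := mul_le_mul_of_nonneg_right hsa (by positivity)
      _ ≤ C * (r/2) ^ θ₂ := h2
  linarith
end

section
/- Let f : ℝ² → ℝ² be defined by f(0) = 0, f(x) = (x/‖x‖)·‖x‖^{1/2} for 0 < ‖x‖ < 1, and f(x) = x for ‖x‖ ≥ 1 (where ‖·‖ is the Euclidean norm). Then f is 2-uniformly bounded: for every x ∈ ℝ², 2 ≤ diam f(B(x,2)) ≤ 6. -/
open Metric Set

/-- The map `f : ℝ² → ℝ²` with `f(0) = 0`,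
`f(x) = (x/‖x‖) ⬝ ‖x‖^{1/2}` for `0 < ‖x‖ < 1`, and `f(x) = x` for `‖x‖ ≥ 1`, is
`2`-uniformly bounded: for every `x ∈ ℝ²`, `2 ≤ diam f(B(x, 2)) ≤ 6`. -/
theorem snowflake_map_two_uniformly_bounded
    (f : EuclideanSpace ℝ (Fin 2) → EuclideanSpace ℝ (Fin 2))
    (hf0 : f 0 = 0)
    (hf1 : ∀ x : EuclideanSpace ℝ (Fin 2), 0 < ‖x‖ → ‖x‖ < 1 →
      f x = (‖x‖ ^ ((1 : ℝ) / 2)) • (‖x‖⁻¹ • x))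
    (hf2 : ∀ x : EuclideanSpace ℝ (Fin 2), 1 ≤ ‖x‖ → f x = x) :
    ∀ x : EuclideanSpace ℝ (Fin 2),
      ENNReal.ofReal 2 ≤ EMetric.diam (f '' ball x 2) ∧
      EMetric.diam (f '' ball x 2) ≤ ENNReal.ofReal 6 := by
  have key : ∀ y : EuclideanSpace ℝ (Fin 2), dist (f y) y ≤ 1/4 := by
    intro y
    rcases eq_or_ne y 0 with h | h
    · simp [h, hf0]
    · have hy : 0 < ‖y‖ := norm_pos_iff.mpr h
      rcases le_or_gt 1 ‖y‖ with h1 | h1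
      · simp [hf2 y h1]
      · rw [hf1 y hy h1, dist_eq_norm]
        have heq : (‖y‖ ^ ((1:ℝ)/2)) • (‖y‖⁻¹ • y) - y
            = ((‖y‖ ^ ((1:ℝ)/2)) * ‖y‖⁻¹ - 1) • y := by
          rw [smul_smul, sub_smul, one_smul]
        rw [heq, norm_smul, Real.norm_eq_abs]
        have hs : ‖y‖ ^ ((1:ℝ)/2) = Real.sqrt ‖y‖ := (Real.sqrt_eq_rpow ‖y‖).symm
        rw [hs]
        set s := Real.sqrt ‖y‖ with hsdef
        have hs2 : s ^ 2 = ‖y‖ := Real.sq_sqrt hy.le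
        have hs0 : 0 ≤ s := Real.sqrt_nonneg _
        have hs1 : s ≤ 1 := Real.sqrt_le_one.mpr h1.le
        have hts : ‖y‖ ≤ s := by nlinarith
        have hc : (1:ℝ) ≤ s * ‖y‖⁻¹ := by
          rw [← div_eq_mul_inv, le_div_iff₀ hy]
          linarith
        rw [abs_of_nonneg (by linarith)]
        have : (s * ‖y‖⁻¹ - 1) * ‖y‖ = s - ‖y‖ := by field_simp
        rw [this]
        nlinarith [sq_nonneg (s - 1/2)]
  intro x
  constructor
  · set u : EuclideanSpace ℝ (Fin 2) := EuclideanSpace.single 0 (3/2 : ℝ) with hu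
    have hun : ‖u‖ = 3/2 := by
      rw [hu, EuclideanSpace.norm_single]
      norm_num
    set a := x + u with ha
    set b := x - u with hb
    have haball : a ∈ ball x 2 := by
      rw [mem_ball, dist_eq_norm, ha]
      simp only [add_sub_cancel_left, hun]
      norm_num
    have hbball : b ∈ ball x 2 := by
      rw [mem_ball, dist_eq_norm, hb]
      simp only [sub_sub_cancel_left, norm_neg, hun]
      norm_num
    have hab : dist a b = 3 := by
      rw [dist_eq_norm, ha, hb]
      have : x + u - (x - u) = (2:ℝ) • u := by
        rw [two_smul]; abel
      rw [this, norm_smul, Real.norm_eq_abs, hun]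
      norm_num
    have hdist : (2:ℝ) ≤ dist (f a) (f b) := by
      have h1 := key a
      have h2 := key b
      have := dist_triangle4 a (f a) (f b) b
      have hab' : dist a b ≤ dist a (f a) + dist (f a) (f b) + dist (f b) b := this
      rw [dist_comm a (f a)] at hab'
      linarith [hab ▸ hab']
    calc ENNReal.ofReal 2 ≤ ENNReal.ofReal (dist (f a) (f b)) :=
          ENNReal.ofReal_le_ofReal hdist
      _ = edist (f a) (f b) := (edist_dist _ _).symm
      _ ≤ EMetric.diam (f '' ball x 2) :=
          EMetric.edist_le_diam_of_mem (mem_image_of_mem f haball)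
            (mem_image_of_mem f hbball)
  · apply EMetric.diam_le
    rintro p ⟨y, hy, rfl⟩ q ⟨z, hz, rfl⟩
    rw [edist_dist]
    apply ENNReal.ofReal_le_ofReal
    have h1 := key y
    have h2 := key z
    have hyz : dist y z ≤ 4 := by
      have := dist_triangle y x z
      rw [mem_ball] at hy hz
      rw [dist_comm z x] at hz
      linarith
    have := dist_triangle4 (f y) y z (f z)
    rw [dist_comm z (f z)] at this
    linarith
end

section
/- Let f : ℝ² → ℝ² be defined by f(0) = 0, f(x) = (x/‖x‖)·‖x‖^{1/2} for 0 < ‖x‖ < 1, and f(x) = x for ‖x‖ ≥ 1 (where ‖·‖ is the Euclidean norm). Then f is not (θ₁,θ₂)-biHölder continuous for any θ₁ > 0 and θ₂ > 0; that is, for all θ₁, θ₂ > 0 and every C ≥ 1 there exist x, y ∈ ℝ² such that the inequalities C⁻¹‖x−y‖^{θ₁} ≤ ‖f(x)−f(y)‖ ≤ C‖x−y‖^{θ₂} fail. -/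
open Metric Set

/-- The map `f : ℝ² → ℝ²` with `f(0) = 0`,
`f(x) = (x/‖x‖) ⬝ ‖x‖^{1/2}` for `0 < ‖x‖ < 1`, and `f(x) = x` for `‖x‖ ≥ 1`, is not
`(θ₁, θ₂)`-biHölder continuous for any `θ₁ > 0` and `θ₂ > 0`: for every `C ≥ 1` there
exist points `x, y` violating the biHölder inequalities. -/
theorem snowflake_map_not_biHolder
    (f : EuclideanSpace ℝ (Fin 2) → EuclideanSpace ℝ (Fin 2))
    (hf0 : f 0 = 0)
    (hf1 : ∀ x : EuclideanSpace ℝ (Fin 2), 0 < ‖x‖ → ‖x‖ < 1 →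
      f x = (‖x‖ ^ ((1 : ℝ) / 2)) • (‖x‖⁻¹ • x))
    (hf2 : ∀ x : EuclideanSpace ℝ (Fin 2), 1 ≤ ‖x‖ → f x = x) :
    ∀ θ₁ θ₂ : ℝ, 0 < θ₁ → 0 < θ₂ → ∀ C : ℝ, 1 ≤ C →
      ∃ x y : EuclideanSpace ℝ (Fin 2),
        ¬ (C⁻¹ * dist x y ^ θ₁ ≤ dist (f x) (f y) ∧
            dist (f x) (f y) ≤ C * dist x y ^ θ₂) := by
  intro θ₁ θ₂ hθ₁ hθ₂ C hC
  set e : EuclideanSpace ℝ (Fin 2) := EuclideanSpace.single 0 1 with he_def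
  have he : ‖e‖ = 1 := by simp [he_def]
  have hC0 : (0:ℝ) < C := lt_of_lt_of_le one_pos hC
  have h2C : (1:ℝ) < 2 * C := by linarith
  rcases le_or_gt θ₂ (1/2) with hcase | hcase
  · -- large scale violation
    have h1θ : (0:ℝ) < 1 - θ₂ := by linarith
    set t : ℝ := (2*C) ^ ((1:ℝ)/(1-θ₂)) with ht_def
    have ht1 : 1 ≤ t := Real.one_le_rpow h2C.le (by positivity)
    have ht0 : 0 < t := lt_of_lt_of_le one_pos ht1
    refine ⟨t • e, 0, ?_⟩
    rintro ⟨-, h⟩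
    have hx : ‖t • e‖ = t := by rw [norm_smul, he, mul_one, Real.norm_eq_abs, abs_of_pos ht0]
    have hfx : f (t • e) = t • e := hf2 _ (by rw [hx]; exact ht1)
    rw [hf0, hfx] at h
    simp only [dist_eq_norm, sub_zero, hx] at h
    have key : t ^ ((1:ℝ) - θ₂) = 2*C := by
      rw [ht_def, ← Real.rpow_mul (by positivity), one_div,
        inv_mul_cancel₀ (ne_of_gt h1θ), Real.rpow_one]
    have hsplit : t = t ^ θ₂ * (2*C) := by
      rw [← key, ← Real.rpow_add ht0]
      norm_num
    have htp : 0 < t ^ θ₂ := Real.rpow_pos_of_pos ht0 θ₂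
    nlinarith
  · -- small scale violation
    have hε : (0:ℝ) < θ₂ - 1/2 := by linarith
    set t : ℝ := (2*C) ^ (-(1/(θ₂ - 1/2))) with ht_def
    have ht0 : 0 < t := Real.rpow_pos_of_pos (by linarith) _
    have ht1 : t < 1 := Real.rpow_lt_one_of_one_lt_of_neg h2C (neg_lt_zero.mpr (by positivity))
    refine ⟨t • e, 0, ?_⟩
    rintro ⟨-, h⟩
    have hx : ‖t • e‖ = t := by rw [norm_smul, he, mul_one, Real.norm_eq_abs, abs_of_pos ht0]
    have hfx : f (t • e) = (t ^ ((1:ℝ)/2)) • (t⁻¹ • (t • e)) := by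
      rw [hf1 _ (by rw [hx]; exact ht0) (by rw [hx]; exact ht1), hx]
    have hnfx : ‖f (t • e)‖ = t ^ ((1:ℝ)/2) := by
      rw [hfx, inv_smul_smul₀ (ne_of_gt ht0), norm_smul, he, mul_one, Real.norm_eq_abs,
        abs_of_pos (Real.rpow_pos_of_pos ht0 _)]
    rw [hf0] at h
    simp only [dist_eq_norm, sub_zero, hx, hnfx] at h
    have key : t ^ (θ₂ - 1/2) = (2*C)⁻¹ := by
      rw [ht_def, ← Real.rpow_mul (by positivity), neg_mul, one_div,
        inv_mul_cancel₀ (ne_of_gt hε), Real.rpow_neg_one]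
    have hsplit : t ^ θ₂ = t ^ ((1:ℝ)/2) * (2*C)⁻¹ := by
      rw [← key, ← Real.rpow_add ht0]
      norm_num
    have htp : 0 < t ^ ((1:ℝ)/2) := Real.rpow_pos_of_pos ht0 _
    rw [hsplit] at h
    have : C * (t ^ ((1:ℝ)/2) * (2*C)⁻¹) = t ^ ((1:ℝ)/2) / 2 := by
      field_simp
    rw [this] at h
    linarith
end

section
/- Let f : ℝ² → ℝ² be defined by f(0) = 0, f(x) = (x/‖x‖)·‖x‖^{1/2} for 0 < ‖x‖ < 1, and f(x) = x for ‖x‖ ≥ 1 (where ‖·‖ is the Euclidean norm). Then f is locally (1, 1/2, 2)-biHölder continuous: there exists a constant C ≥ 1 such that for all x, y ∈ ℝ² with ‖x−y‖ < 2, C⁻¹‖x−y‖ ≤ ‖f(x)−f(y)‖ ≤ C‖x−y‖^{1/2}. -/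
open Metric Set

noncomputable def Snow {F : Type*} [NormedAddCommGroup F] [InnerProductSpace ℝ F] (x : F) : F :=
  (Real.sqrt ‖x‖)⁻¹ • x

variable {F : Type*} [NormedAddCommGroup F] [InnerProductSpace ℝ F]

lemma normSnow (x : F) : ‖Snow x‖ = Real.sqrt ‖x‖ := by
  rcases eq_or_ne x 0 with rfl | hx
  · simp [Snow]
  · have h : (0:ℝ) < ‖x‖ := norm_pos_iff.mpr hx
    rw [Snow, norm_smul, Real.norm_eq_abs, abs_inv, abs_of_nonneg (Real.sqrt_nonneg _),
      inv_mul_eq_div, Real.div_sqrt]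

lemma keyB (u v c : ℝ) (hu0 : 0 ≤ u) (hu1 : u ≤ 1) (hv0 : 0 ≤ v) (hv1 : v ≤ 1)
    (hc : -1 ≤ c) (hc1 : c ≤ 1) :
    u^4 + v^4 - 2*u^2*v^2*c ≤ 4*(u^2 + v^2 - 2*u*v*c) := by
  nlinarith [mul_nonneg (sq_nonneg (u-v)) (sub_nonneg.mpr (by nlinarith : (u+v)^2 ≤ 4)),
    mul_nonneg (mul_nonneg (mul_nonneg hu0 hv0) (by linarith : (0:ℝ) ≤ 1 - c))
      (by nlinarith : (0:ℝ) ≤ 4 - u*v)]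

lemma keyA (u v c : ℝ) (hu0 : 0 ≤ u) (hu1 : u ≤ 1) (hv0 : 0 ≤ v) (hv1 : v ≤ 1)
    (hc : -1 ≤ c) (hc1 : c ≤ 1) :
    u^2 + v^2 - 2*u*v*c ≤ 3 * Real.sqrt (u^4 + v^4 - 2*u^2*v^2*c) := by
  set q := Real.sqrt (u^4 + v^4 - 2*u^2*v^2*c) with hqdef
  have huv : 0 ≤ u*v := mul_nonneg hu0 hv0
  have e1 : ((u-v)^2)^2 ≤ u^4 + v^4 - 2*u^2*v^2*c := by
    nlinarith [mul_nonneg huv (sq_nonneg (u-v)),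
      mul_nonneg (mul_nonneg huv huv) (by linarith : (0:ℝ) ≤ 1 - c)]
  have e2 : (u*v*(1-c))^2 ≤ u^4 + v^4 - 2*u^2*v^2*c := by
    nlinarith [sq_nonneg (u^2-v^2),
      mul_nonneg (mul_nonneg (mul_nonneg huv huv) (by linarith : (0:ℝ) ≤ 1 - c))
        (by linarith : (0:ℝ) ≤ 1 + c)]
  have h1 : (u-v)^2 ≤ q := Real.le_sqrt_of_sq_le e1
  have h2 : u*v*(1-c) ≤ q := Real.le_sqrt_of_sq_le e2
  nlinarith [h1, h2]

lemma inside (x y : F) (hx : ‖x‖ ≤ 1) (hy : ‖y‖ ≤ 1) :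
    ‖x - y‖ ≤ 2 * ‖Snow x - Snow y‖ ∧ ‖Snow x - Snow y‖^2 ≤ 3 * ‖x - y‖ := by
  rcases eq_or_ne x 0 with rfl | hx0
  · have h0 : Snow (0:F) = 0 := by simp [Snow]
    rw [h0, zero_sub, zero_sub, norm_neg, norm_neg, normSnow]
    have h1 : Real.sqrt ‖y‖ * Real.sqrt ‖y‖ = ‖y‖ := Real.mul_self_sqrt (norm_nonneg _)
    have h2 : Real.sqrt ‖y‖ ≤ 1 := Real.sqrt_le_one.mpr hy
    have h3 : 0 ≤ Real.sqrt ‖y‖ := Real.sqrt_nonneg _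
    constructor <;> nlinarith
  rcases eq_or_ne y 0 with rfl | hy0
  · have h0 : Snow (0:F) = 0 := by simp [Snow]
    rw [h0, sub_zero, sub_zero, normSnow]
    have h1 : Real.sqrt ‖x‖ * Real.sqrt ‖x‖ = ‖x‖ := Real.mul_self_sqrt (norm_nonneg _)
    have h2 : Real.sqrt ‖x‖ ≤ 1 := Real.sqrt_le_one.mpr hx
    have h3 : 0 ≤ Real.sqrt ‖x‖ := Real.sqrt_nonneg _
    constructor <;> nlinarith
  · have hr : (0:ℝ) < ‖x‖ := norm_pos_iff.mpr hx0
    have hs : (0:ℝ) < ‖y‖ := norm_pos_iff.mpr hy0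
    set u := Real.sqrt ‖x‖ with hu
    set v := Real.sqrt ‖y‖ with hv
    have hu0 : 0 < u := Real.sqrt_pos.mpr hr
    have hv0 : 0 < v := Real.sqrt_pos.mpr hs
    have hu1 : u ≤ 1 := Real.sqrt_le_one.mpr hx
    have hv1 : v ≤ 1 := Real.sqrt_le_one.mpr hy
    have hu2 : u^2 = ‖x‖ := Real.sq_sqrt (norm_nonneg _)
    have hv2 : v^2 = ‖y‖ := Real.sq_sqrt (norm_nonneg _)
    set t : ℝ := inner ℝ x y with ht
    set c : ℝ := t / (‖x‖ * ‖y‖) with hc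
    have htc : t = u^2 * v^2 * c := by
      rw [hc, hu2, hv2]; field_simp
    have hcb : |c| ≤ 1 := by
      rw [hc, abs_div, abs_of_pos (by positivity : (0:ℝ) < ‖x‖ * ‖y‖), div_le_one (by positivity)]
      exact abs_real_inner_le_norm x y
    rw [abs_le] at hcb
    have hA : ‖x - y‖^2 = u^4 + v^4 - 2*u^2*v^2*c := by
      rw [@norm_sub_sq_real F _ _ x y, ← ht, htc, ← hu2, ← hv2]; ring
    have hB : ‖Snow x - Snow y‖^2 = u^2 + v^2 - 2*u*v*c := by
      rw [@norm_sub_sq_real F _ _ (Snow x) (Snow y), normSnow, normSnow, ← hu, ← hv]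
      have hinner : (inner ℝ (Snow x) (Snow y) : ℝ) = u⁻¹ * (v⁻¹ * t) := by
        rw [Snow, Snow, real_inner_smul_left, real_inner_smul_right, ← hu, ← hv, ← ht]
      rw [hinner, htc]
      field_simp
      ring
    have hkA := keyA u v c hu0.le hu1 hv0.le hv1 hcb.1 hcb.2
    have hkB := keyB u v c hu0.le hu1 hv0.le hv1 hcb.1 hcb.2
    constructor
    · have h4 : ‖x - y‖^2 ≤ (2 * ‖Snow x - Snow y‖)^2 := by
        rw [hA, mul_pow, hB]; linarith
      calc ‖x - y‖ = Real.sqrt (‖x - y‖^2) := (Real.sqrt_sq (norm_nonneg _)).symm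
        _ ≤ Real.sqrt ((2 * ‖Snow x - Snow y‖)^2) := Real.sqrt_le_sqrt h4
        _ = 2 * ‖Snow x - Snow y‖ := Real.sqrt_sq (by positivity)
    · rw [hB]
      calc u^2 + v^2 - 2*u*v*c ≤ 3 * Real.sqrt (u^4 + v^4 - 2*u^2*v^2*c) := hkA
        _ = 3 * Real.sqrt (‖x - y‖^2) := by rw [hA]
        _ = 3 * ‖x - y‖ := by rw [Real.sqrt_sq (norm_nonneg _)]

lemma snow_fixed (z : F) (hz : ‖z‖ = 1) : Snow z = z := by
  rw [Snow, hz, Real.sqrt_one, inv_one, one_smul]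

lemma sqrt2le : Real.sqrt 2 ≤ (3:ℝ)/2 := by
  nlinarith [Real.sq_sqrt (by norm_num : (0:ℝ) ≤ 2), Real.sqrt_nonneg 2]

lemma mixed (x y : F) (hx : ‖x‖ ≤ 1) (hy : 1 ≤ ‖y‖) (hd : ‖x - y‖ < 2) :
    5⁻¹ * ‖x - y‖ ≤ ‖Snow x - y‖ ∧ ‖Snow x - y‖ ≤ 5 * Real.sqrt ‖x - y‖ := by
  have hs0 : (0:ℝ) < ‖y‖ := lt_of_lt_of_le one_pos hy
  set z : F := ‖y‖⁻¹ • y with hzdef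
  have hz : ‖z‖ = 1 := by
    rw [hzdef, norm_smul, Real.norm_eq_abs, abs_inv, abs_of_pos hs0, inv_mul_cancel₀ hs0.ne']
  have hSz : Snow z = z := snow_fixed z hz
  have hzy : ‖z - y‖ = ‖y‖ - 1 := by
    have : z - y = (‖y‖⁻¹ - 1) • y := by rw [hzdef, sub_smul, one_smul]
    rw [this, norm_smul, Real.norm_eq_abs, abs_of_nonpos (by simp [inv_le_one_of_one_le]; bound)]
    field_simp
    ring
  have hproj : ‖x - z‖ ≤ ‖x - y‖ := by
    have e1 : ‖x - z‖^2 = ‖x‖^2 - 2 * (‖y‖⁻¹ * inner ℝ x y) + 1 := by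
      rw [@norm_sub_sq_real F _ _ x z, hzdef, real_inner_smul_right, hz]; ring_nf
    have e2 : ‖x - y‖^2 = ‖x‖^2 - 2 * (inner ℝ x y : ℝ) + ‖y‖^2 := @norm_sub_sq_real F _ _ x y
    have ht : (inner ℝ x y : ℝ) ≤ ‖y‖ := by
      calc (inner ℝ x y : ℝ) ≤ ‖x‖ * ‖y‖ := real_inner_le_norm x y
        _ ≤ 1 * ‖y‖ := by nlinarith
        _ = ‖y‖ := one_mul _
    have hsq : ‖x - z‖^2 ≤ ‖x - y‖^2 := by
      rw [e1, e2]
      have key : 0 ≤ ‖y‖^2 - 1 - 2 * (inner ℝ x y : ℝ) * (1 - ‖y‖⁻¹) := by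
        have h5 : (0:ℝ) ≤ ‖y‖ * (‖y‖^2 - 1 - 2 * (inner ℝ x y : ℝ) * (1 - ‖y‖⁻¹)) := by
          have expand : ‖y‖ * (‖y‖^2 - 1 - 2 * (inner ℝ x y : ℝ) * (1 - ‖y‖⁻¹))
              = ‖y‖^3 - ‖y‖ - 2 * (inner ℝ x y : ℝ) * (‖y‖ - 1) := by
            field_simp
          rw [expand]
          nlinarith [mul_nonneg (sub_nonneg.mpr ht) (sub_nonneg.mpr hy),
            mul_nonneg (mul_nonneg hs0.le (sub_nonneg.mpr hy)) (sub_nonneg.mpr hy)]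
        nlinarith [hs0, h5]
      nlinarith [key]
    calc ‖x - z‖ = Real.sqrt (‖x - z‖^2) := (Real.sqrt_sq (norm_nonneg _)).symm
      _ ≤ Real.sqrt (‖x - y‖^2) := Real.sqrt_le_sqrt hsq
      _ = ‖x - y‖ := Real.sqrt_sq (norm_nonneg _)
  have hsy : ‖y‖ - 1 ≤ ‖x - y‖ := by
    have := norm_sub_norm_le y x
    rw [norm_sub_rev] at this
    linarith [this, hx, norm_nonneg x]
  obtain ⟨hlo, hhi⟩ := inside x z hx hz.le
  rw [hSz] at hlo hhi
  set q := Real.sqrt ‖x - y‖ with hq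
  have hq0 : 0 ≤ q := Real.sqrt_nonneg _
  have hq2 : q^2 = ‖x - y‖ := Real.sq_sqrt (norm_nonneg _)
  have hqle : q ≤ 3/2 := by
    calc q ≤ Real.sqrt 2 := Real.sqrt_le_sqrt hd.le
      _ ≤ 3/2 := sqrt2le
  constructor
  · -- lower bound
    have hSx1 : ‖Snow x‖ ≤ 1 := by rw [normSnow]; exact Real.sqrt_le_one.mpr hx
    have h1 : ‖y‖ - 1 ≤ ‖Snow x - y‖ := by
      have := norm_sub_norm_le y (Snow x)
      rw [norm_sub_rev] at this
      linarith
    have h3 : ‖Snow x - z‖ ≤ ‖Snow x - y‖ + (‖y‖ - 1) := by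
      calc ‖Snow x - z‖ ≤ ‖Snow x - y‖ + ‖y - z‖ := norm_sub_le_norm_sub_add_norm_sub _ _ _
        _ = ‖Snow x - y‖ + (‖y‖ - 1) := by rw [norm_sub_rev y z, hzy]
    have h4 : ‖x - y‖ ≤ ‖x - z‖ + ‖z - y‖ := norm_sub_le_norm_sub_add_norm_sub _ _ _
    rw [hzy] at h4
    linarith
  · -- upper bound
    have e5 : ‖Snow x - z‖ ≤ 2 * q := by
      have : ‖Snow x - z‖^2 ≤ (2*q)^2 := by
        rw [mul_pow, hq2]; nlinarith [hhi, hproj]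
      calc ‖Snow x - z‖ = Real.sqrt (‖Snow x - z‖^2) := (Real.sqrt_sq (norm_nonneg _)).symm
        _ ≤ Real.sqrt ((2*q)^2) := Real.sqrt_le_sqrt this
        _ = 2*q := Real.sqrt_sq (by positivity)
    have e6 : ‖Snow x - y‖ ≤ ‖Snow x - z‖ + ‖z - y‖ := norm_sub_le_norm_sub_add_norm_sub _ _ _
    rw [hzy] at e6
    have e7 : ‖y‖ - 1 ≤ q^2 := by rw [hq2]; linarith
    nlinarith [e5, e6, e7, hq0, hqle]


lemma f_eq_snow (f : EuclideanSpace ℝ (Fin 2) → EuclideanSpace ℝ (Fin 2))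
    (hf0 : f 0 = 0)
    (hf1 : ∀ x : EuclideanSpace ℝ (Fin 2), 0 < ‖x‖ → ‖x‖ < 1 →
      f x = (‖x‖ ^ ((1 : ℝ) / 2)) • (‖x‖⁻¹ • x))
    (hf2 : ∀ x : EuclideanSpace ℝ (Fin 2), 1 ≤ ‖x‖ → f x = x)
    (x : EuclideanSpace ℝ (Fin 2)) (hx : ‖x‖ ≤ 1) : f x = Snow x := by
  rcases eq_or_ne x 0 with rfl | hx0
  · rw [hf0]; simp [Snow]
  · have hr : (0:ℝ) < ‖x‖ := norm_pos_iff.mpr hx0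
    rcases lt_or_eq_of_le hx with hlt | heq
    · rw [hf1 x hr hlt, Snow, smul_smul]
      congr 1
      rw [← Real.sqrt_eq_rpow]
      have hs0 : Real.sqrt ‖x‖ ≠ 0 := (Real.sqrt_pos.mpr hr).ne'
      field_simp
      exact Real.sq_sqrt hr.le
    · rw [hf2 x heq.ge, snow_fixed x heq]

lemma le_five_sqrt {e d : ℝ} (h : e^2 ≤ 25 * d) : e ≤ 5 * Real.sqrt d := by
  calc e ≤ Real.sqrt (25 * d) := Real.le_sqrt_of_sq_le h
    _ = 5 * Real.sqrt d := by
        rw [Real.sqrt_mul (by norm_num : (0:ℝ) ≤ 25), show (25:ℝ) = 5^2 by norm_num,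
          Real.sqrt_sq (by norm_num : (0:ℝ) ≤ 5)]

/-- The map `f : ℝ² → ℝ²` with `f(0) = 0`,
`f(x) = (x/‖x‖) ⬝ ‖x‖^{1/2}` for `0 < ‖x‖ < 1`, and `f(x) = x` for `‖x‖ ≥ 1`, is locally
`(1, 1/2, 2)`-biHölder continuous: there is `C ≥ 1` such that for all `x, y` with
`‖x - y‖ < 2`, `C⁻¹ ‖x - y‖ ≤ ‖f(x) - f(y)‖ ≤ C ‖x - y‖^{1/2}`. -/
theorem snowflake_map_locally_biHolder
    (f : EuclideanSpace ℝ (Fin 2) → EuclideanSpace ℝ (Fin 2))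
    (hf0 : f 0 = 0)
    (hf1 : ∀ x : EuclideanSpace ℝ (Fin 2), 0 < ‖x‖ → ‖x‖ < 1 →
      f x = (‖x‖ ^ ((1 : ℝ) / 2)) • (‖x‖⁻¹ • x))
    (hf2 : ∀ x : EuclideanSpace ℝ (Fin 2), 1 ≤ ‖x‖ → f x = x) :
    ∃ C : ℝ, 1 ≤ C ∧ ∀ x y : EuclideanSpace ℝ (Fin 2), dist x y < 2 →
      C⁻¹ * dist x y ≤ dist (f x) (f y) ∧
      dist (f x) (f y) ≤ C * dist x y ^ ((1 : ℝ) / 2) := by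
  refine ⟨5, by norm_num, ?_⟩
  intro x y hd
  rw [dist_eq_norm, dist_eq_norm] at *
  rw [← Real.sqrt_eq_rpow]
  have hd0 : (0:ℝ) ≤ ‖x - y‖ := norm_nonneg _
  rcases le_total ‖x‖ 1 with hx | hx <;> rcases le_total ‖y‖ 1 with hy | hy
  · -- both inside
    rw [f_eq_snow f hf0 hf1 hf2 x hx, f_eq_snow f hf0 hf1 hf2 y hy]
    obtain ⟨hlo, hhi⟩ := inside x y hx hy
    constructor
    · linarith [norm_nonneg (Snow x - Snow y)]
    · exact le_five_sqrt (by nlinarith)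
  · -- x inside, y outside
    rw [f_eq_snow f hf0 hf1 hf2 x hx, hf2 y hy]
    obtain ⟨hlo, hhi⟩ := mixed x y hx hy hd
    exact ⟨hlo, hhi⟩
  · -- x outside, y inside
    rw [hf2 x hx, f_eq_snow f hf0 hf1 hf2 y hy]
    have hd' : ‖y - x‖ < 2 := by rwa [norm_sub_rev]
    obtain ⟨hlo, hhi⟩ := mixed y x hy hx hd'
    rw [norm_sub_rev (Snow y) x, norm_sub_rev y x] at hlo hhi
    exact ⟨hlo, hhi⟩
  · -- both outside
    rw [hf2 x hx, hf2 y hy]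
    constructor
    · linarith
    · exact le_five_sqrt (by nlinarith)
end

section
/- Let (Z,d_Z) be an unbounded κ-uniformly perfect metric space with κ > 1, let (W,d_W) be a metric space, and let θ₁ > 0, θ₂ > 0. If a homeomorphism f : Z → W is (θ₁,θ₂)-biHölder continuous, then θ₁ = θ₂; that is, f is a snowflake mapping. -/
open Metric Set

/-- If `Z` is an unbounded `κ`-uniformly perfect metric space (`κ > 1`)
and a homeomorphism `f : Z → W` is `(θ₁, θ₂)`-biHölder continuous (with some coefficient
`C ≥ 1`), then `θ₁ = θ₂`; i.e. `f` is a snowflake mapping. -/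
theorem biHolder_on_unbounded_is_snowflake {Z W : Type*} [MetricSpace Z] [MetricSpace W]
    (κ : ℝ) (hκ : 1 < κ) (hZ : UniformlyPerfect Z κ)
    (hunb : ¬ Bornology.IsBounded (Set.univ : Set Z))
    (θ₁ θ₂ : ℝ) (hθ₁ : 0 < θ₁) (hθ₂ : 0 < θ₂)
    (f : Z ≃ₜ W) (C : ℝ) (hC : 1 ≤ C)
    (hf : ∀ x y : Z,
      C⁻¹ * dist x y ^ θ₁ ≤ dist (f x) (f y) ∧ dist (f x) (f y) ≤ C * dist x y ^ θ₂) :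
    θ₁ = θ₂ := by
  by_contra hne
  have hC0 : (0:ℝ) < C := lt_of_lt_of_le one_pos hC
  have key : ∀ x y : Z, 0 < dist x y → dist x y ^ (θ₁ - θ₂) ≤ C ^ 2 := by
    intro x y hd
    obtain ⟨h1, h2⟩ := hf x y
    have h3 : dist x y ^ θ₁ ≤ C ^ 2 * dist x y ^ θ₂ := by
      have h := h1.trans h2
      rw [inv_mul_le_iff₀ hC0] at h
      calc dist x y ^ θ₁ ≤ C * (C * dist x y ^ θ₂) := h
        _ = C ^ 2 * dist x y ^ θ₂ := by ring
    rw [Real.rpow_sub hd, div_le_iff₀ (Real.rpow_pos_of_pos hd θ₂)]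
    exact h3
  have hneZ : Nonempty Z := by
    by_contra h
    exact hunb (by
      rw [Set.univ_eq_empty_iff.mpr (not_nonempty_iff.mp h)]
      exact Bornology.isBounded_empty)
  obtain ⟨x₀⟩ := hneZ
  have hlarge : ∀ R : ℝ, ∃ y : Z, R < dist x₀ y := by
    intro R
    by_contra h
    push_neg at h
    exact hunb ((Metric.isBounded_iff_subset_closedBall x₀).mpr
      ⟨R, fun y _ => by simpa [Metric.mem_closedBall, dist_comm] using h y⟩)
  have hCC : (0:ℝ) < C ^ 2 + 1 := by positivity
  rcases lt_or_gt_of_ne hne with hlt | hgt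
  · -- θ₁ < θ₂ : use small distances
    set ε := θ₂ - θ₁ with hε
    have hε0 : 0 < ε := by linarith
    set r := ((C ^ 2 + 1)⁻¹) ^ ε⁻¹ with hr
    have hr0 : 0 < r := Real.rpow_pos_of_pos (by positivity) _
    obtain ⟨y, hy⟩ := hlarge r
    have hA : (Set.univ \ ball x₀ r).Nonempty := by
      refine ⟨y, trivial, ?_⟩
      simp only [Metric.mem_ball, not_lt]
      rw [dist_comm]; linarith
    obtain ⟨z, hz1, hz2⟩ := hZ x₀ r hr0 hA
    have hd1 : dist x₀ z < r := by
      rw [dist_comm]; exact Metric.mem_ball.mp hz1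
    have hd0 : 0 < dist x₀ z := by
      have hrk : r / κ ≤ dist x₀ z := by
        have := Metric.mem_ball.not.mp hz2
        rw [not_lt, dist_comm] at this
        exact this
      have : 0 < r / κ := div_pos hr0 (by linarith)
      linarith
    have hk := key x₀ z hd0
    have hde : (dist x₀ z) ^ ε < (C ^ 2 + 1)⁻¹ := by
      have := Real.rpow_lt_rpow hd0.le hd1 hε0
      rwa [hr, Real.rpow_inv_rpow (by positivity) hε0.ne'] at this
    have h5 : (C ^ 2 + 1) < ((dist x₀ z) ^ ε)⁻¹ := by
      rw [lt_inv_comm₀ hCC (Real.rpow_pos_of_pos hd0 ε)] at *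
      exact hde
    have h6 : dist x₀ z ^ (θ₁ - θ₂) = ((dist x₀ z) ^ ε)⁻¹ := by
      rw [← Real.rpow_neg hd0.le]
      congr 1
      rw [hε]; ring
    rw [h6] at hk
    linarith
  · -- θ₁ > θ₂ : use large distances
    set ε := θ₁ - θ₂ with hε
    have hε0 : 0 < ε := by linarith
    set R := (C ^ 2 + 1) ^ ε⁻¹ with hR
    obtain ⟨y, hy⟩ := hlarge R
    have hR0 : 0 < R := Real.rpow_pos_of_pos hCC _
    have hd0 : 0 < dist x₀ y := lt_trans hR0 hy
    have hk := key x₀ y hd0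
    have hde : (C ^ 2 + 1) < (dist x₀ y) ^ ε := by
      have := Real.rpow_lt_rpow hR0.le hy hε0
      rwa [hR, Real.rpow_inv_rpow hCC.le hε0.ne'] at this
    linarith
end

section
/- Let f : ℝ² → ℝ² be defined by f(0) = 0, f(x) = (x/‖x‖)·‖x‖^{1/2} for 0 < ‖x‖ < 1, and f(x) = x for ‖x‖ ≥ 1, and equip ℝ² with the Euclidean metric and the Lebesgue measure (so ℝ² is Ahlfors 2-regular). Let s > 0, s′ > 0 and p ≥ 1 satisfy (s − 2s′)p ≥ 2. Then there is a constant C > 0 such that for every measurable u : ℝ² → ℝ with ‖u‖_{B^s_{p,p}(ℝ²)} < ∞, the composition u∘f satisfies ‖u∘f‖_{B^{s′}_{p,p}(ℝ²)} ≤ C ‖u‖_{B^s_{p,p}(ℝ²)}; i.e. f induces a canonical bounded embedding f_# : B^s_{p,p}(ℝ²) → B^{s′}_{p,p}(ℝ²) via composition. -/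
open Metric Set MeasureTheory ENNReal

/-- The `p`-th power of the homogeneous Besov seminorm on the Euclidean plane with
Lebesgue measure:
`∫_{ℝ²} ∫_{ℝ²} |u(x) − u(y)|^p / (|x−y|^{sp} m(B(x, |x−y|))) dm(y) dm(x)`. -/
noncomputable def besovDoubleR2 (s p : ℝ) (u : EuclideanSpace ℝ (Fin 2) → ℝ) : ℝ≥0∞ :=
  ∫⁻ x, ∫⁻ y, ENNReal.ofReal (|u x - u y| ^ p) /
      (ENNReal.ofReal (dist x y ^ (s * p)) * volume (ball x (dist x y))) ∂volume ∂volume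

/-- The Besov norm `‖u‖_{B^s_{p,p}(ℝ²)} = ‖u‖_{L^p(ℝ²)} + ‖u‖_{Ḃ^s_{p,p}(ℝ²)}`. -/
noncomputable def besovNormR2 (s p : ℝ) (u : EuclideanSpace ℝ (Fin 2) → ℝ) : ℝ≥0∞ :=
  eLpNorm u (ENNReal.ofReal p) volume + besovDoubleR2 s p u ^ (1 / p)

open Module Real
open scoped RealInnerProductSpace NNReal
set_option maxHeartbeats 1600000

noncomputable section SnowflakeAux

lemma le_of_sq_le_sq' {x y : ℝ} (hx : 0 ≤ x) (hy : 0 ≤ y) (h : x^2 ≤ y^2) : x ≤ y := by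
  exact (pow_le_pow_iff_left₀ hx hy (by norm_num)).mp h

/-- The inverse of the snowflake map: `a ↦ ‖a‖ a` inside the unit ball, identity outside. -/
def hmap (a : EuclideanSpace ℝ (Fin 2)) : EuclideanSpace ℝ (Fin 2) :=
  if ‖a‖ ≤ 1 then ‖a‖ • a else a

lemma norm_smul_sub_smul_sq (a b : EuclideanSpace ℝ (Fin 2)) (r t : ℝ) :
    ‖r • a - t • b‖ ^ 2 = r ^ 2 * ‖a‖ ^ 2 - 2 * (r * t) * ⟪a, b⟫ + t ^ 2 * ‖b‖ ^ 2 := by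
  rw [norm_sub_sq_real, real_inner_smul_left, real_inner_smul_right, norm_smul, norm_smul,
    mul_pow, mul_pow, Real.norm_eq_abs, Real.norm_eq_abs, sq_abs, sq_abs]
  ring

lemma hmap_lip_dist (a b : EuclideanSpace ℝ (Fin 2)) :
    dist (hmap a) (hmap b) ≤ 2 * dist a b := by
  have hsymm : ∀ a b : EuclideanSpace ℝ (Fin 2), ‖b‖ ≤ ‖a‖ →
      dist (hmap a) (hmap b) ≤ 2 * dist a b := by
    intro a b hba
    have hab : ‖a‖ - ‖b‖ ≤ ‖a - b‖ := (le_abs_self _).trans (abs_norm_sub_norm_le a b)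
    by_cases ha : ‖a‖ ≤ 1
    · have hb : ‖b‖ ≤ 1 := le_trans hba ha
      simp only [hmap, if_pos ha, if_pos hb, dist_eq_norm]
      have h1 : ‖a‖ • a - ‖b‖ • b = ‖a‖ • (a - b) + (‖a‖ - ‖b‖) • b := by
        simp only [smul_sub, sub_smul]; abel
      rw [h1]
      have e1 : ‖‖a‖ • (a - b)‖ ≤ ‖a - b‖ := by
        rw [norm_smul, Real.norm_eq_abs, abs_of_nonneg (norm_nonneg a)]
        nlinarith [norm_nonneg (a - b)]
      have e2 : ‖(‖a‖ - ‖b‖) • b‖ ≤ ‖a - b‖ := by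
        rw [norm_smul, Real.norm_eq_abs, abs_of_nonneg (by linarith : (0:ℝ) ≤ ‖a‖ - ‖b‖)]
        nlinarith [norm_nonneg b]
      calc ‖‖a‖ • (a - b) + (‖a‖ - ‖b‖) • b‖ ≤ ‖‖a‖ • (a - b)‖ + ‖(‖a‖ - ‖b‖) • b‖ :=
            norm_add_le _ _
        _ ≤ 2 * ‖a - b‖ := by linarith
    · push_neg at ha
      by_cases hb : ‖b‖ ≤ 1
      · simp only [hmap, if_neg (not_le.mpr ha), if_pos hb, dist_eq_norm]
        have h1 : a - ‖b‖ • b = (a - b) + (1 - ‖b‖) • b := by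
          simp only [sub_smul, one_smul]; abel
        rw [h1]
        have e2 : ‖(1 - ‖b‖) • b‖ ≤ ‖a - b‖ := by
          rw [norm_smul, Real.norm_eq_abs, abs_of_nonneg (by linarith : (0:ℝ) ≤ 1 - ‖b‖)]
          nlinarith [norm_nonneg b]
        calc ‖(a - b) + (1 - ‖b‖) • b‖ ≤ ‖a - b‖ + ‖(1 - ‖b‖) • b‖ := norm_add_le _ _
          _ ≤ 2 * ‖a - b‖ := by linarith
      · push_neg at hb
        simp only [hmap, if_neg (not_le.mpr ha), if_neg (not_le.mpr hb)]
        nlinarith [dist_nonneg (x := a) (y := b)]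
  rcases le_total ‖b‖ ‖a‖ with h | h
  · exact hsymm a b h
  · rw [dist_comm, dist_comm a b]; exact hsymm b a h

lemma hmap_lipschitz : LipschitzWith 2 hmap :=
  LipschitzWith.of_dist_le_mul (fun x y => by simpa using hmap_lip_dist x y)

lemma hmap_lower (a b : EuclideanSpace ℝ (Fin 2)) :
    min (dist a b) 2 * dist a b ≤ 4 * dist (hmap a) (hmap b) := by
  have hsymm : ∀ a b : EuclideanSpace ℝ (Fin 2), ‖b‖ ≤ ‖a‖ →
      min (dist a b) 2 * dist a b ≤ 4 * dist (hmap a) (hmap b) := by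
    intro a b hba
    have hdn : (0:ℝ) ≤ ‖a - b‖ := norm_nonneg _
    have hCS : |⟪a, b⟫| ≤ ‖a‖ * ‖b‖ := abs_real_inner_le_norm a b
    obtain ⟨hCS1, hCS2⟩ := abs_le.mp hCS
    have hA : (0:ℝ) ≤ ‖a‖ := norm_nonneg a
    have hB : (0:ℝ) ≤ ‖b‖ := norm_nonneg b
    have hsq : ‖a - b‖ ^ 2 = ‖a‖ ^ 2 - 2 * ⟪a, b⟫ + ‖b‖ ^ 2 := norm_sub_sq_real a b
    have htriangle : ‖a - b‖ ≤ ‖a‖ + ‖b‖ := norm_sub_le a b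
    by_cases ha : ‖a‖ ≤ 1
    · have hb : ‖b‖ ≤ 1 := le_trans hba ha
      simp only [hmap, if_pos ha, if_pos hb, dist_eq_norm]
      have hsq2 : ‖‖a‖ • a - ‖b‖ • b‖ ^ 2
          = ‖a‖^2 * ‖a‖^2 - 2 * (‖a‖ * ‖b‖) * ⟪a,b⟫ + ‖b‖^2 * ‖b‖^2 :=
        norm_smul_sub_smul_sq a b ‖a‖ ‖b‖
      have hkey : ‖a‖^2 * ‖a - b‖^2 ≤ 4 * ‖‖a‖ • a - ‖b‖ • b‖^2 := by
        rw [hsq2, hsq]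
        nlinarith [sq_nonneg (‖a‖ - ‖b‖), sq_nonneg (‖a‖ + ‖b‖), mul_nonneg hA hB,
          sq_nonneg (‖a‖*‖b‖ - ⟪a,b⟫), sq_nonneg (‖a‖*‖b‖ + ⟪a,b⟫)]
      have hkey' : ‖a‖ * ‖a - b‖ ≤ 2 * ‖‖a‖ • a - ‖b‖ • b‖ := by
        apply le_of_sq_le_sq' (mul_nonneg hA hdn) (by positivity)
        calc (‖a‖ * ‖a - b‖)^2 = ‖a‖^2 * ‖a - b‖^2 := by ring
          _ ≤ 4 * ‖‖a‖ • a - ‖b‖ • b‖^2 := hkey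
          _ = (2 * ‖‖a‖ • a - ‖b‖ • b‖)^2 := by ring
      have hmin : min ‖a - b‖ 2 ≤ 2 * ‖a‖ := by
        calc min ‖a - b‖ 2 ≤ ‖a - b‖ := min_le_left _ _
          _ ≤ ‖a‖ + ‖b‖ := htriangle
          _ ≤ 2 * ‖a‖ := by linarith
      calc min ‖a - b‖ 2 * ‖a - b‖ ≤ (2 * ‖a‖) * ‖a - b‖ :=
            mul_le_mul_of_nonneg_right hmin hdn
        _ = 2 * (‖a‖ * ‖a - b‖) := by ring
        _ ≤ 2 * (2 * ‖‖a‖ • a - ‖b‖ • b‖) := by linarith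
        _ = 4 * ‖‖a‖ • a - ‖b‖ • b‖ := by ring
    · push_neg at ha
      by_cases hb : ‖b‖ ≤ 1
      · simp only [hmap, if_neg (not_le.mpr ha), if_pos hb, dist_eq_norm]
        have hsq2 : ‖a - ‖b‖ • b‖ ^ 2 = 1^2 * ‖a‖^2 - 2 * (1 * ‖b‖) * ⟪a,b⟫ + ‖b‖^2 * ‖b‖^2 := by
          have := norm_smul_sub_smul_sq a b 1 ‖b‖
          simpa using this
        have hfac1 : (0:ℝ) ≤ 3*‖a‖ - ‖b‖*(2*‖b‖+1) := by nlinarith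
        have hfac2 : (0:ℝ) ≤ ‖a‖ - ‖b‖*(2*‖b‖-1) := by nlinarith
        have hkey : ‖a - b‖^2 ≤ 4 * ‖a - ‖b‖ • b‖^2 := by
          rw [hsq2, hsq]
          rcases le_total (8*‖b‖) 2 with hc | hc
          · nlinarith [mul_nonneg (by linarith : (0:ℝ) ≤ 2 - 8*‖b‖)
              (by linarith : (0:ℝ) ≤ ‖a‖*‖b‖ + ⟪a,b⟫), mul_nonneg hA hB,
              mul_nonneg (mul_nonneg hA hB) hB, mul_nonneg hA (mul_nonneg hB hB)]
          · nlinarith [mul_nonneg (by linarith : (0:ℝ) ≤ 8*‖b‖ - 2)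
              (by linarith : (0:ℝ) ≤ ‖a‖*‖b‖ - ⟪a,b⟫), mul_nonneg hfac1 hfac2]
        have hkey' : ‖a - b‖ ≤ 2 * ‖a - ‖b‖ • b‖ := by
          apply le_of_sq_le_sq' hdn (by positivity)
          calc ‖a - b‖^2 ≤ 4 * ‖a - ‖b‖ • b‖^2 := hkey
            _ = (2 * ‖a - ‖b‖ • b‖)^2 := by ring
        calc min ‖a - b‖ 2 * ‖a - b‖ ≤ 2 * ‖a - b‖ :=
              mul_le_mul_of_nonneg_right (min_le_right _ _) hdn
          _ ≤ 4 * ‖a - ‖b‖ • b‖ := by linarith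
      · push_neg at hb
        simp only [hmap, if_neg (not_le.mpr ha), if_neg (not_le.mpr hb)]
        have h2 : min (dist a b) 2 ≤ 2 := min_le_right _ _
        nlinarith [dist_nonneg (x := a) (y := b)]
  rcases le_total ‖b‖ ‖a‖ with h | h
  · exact hsymm a b h
  · rw [dist_comm a b, dist_comm (hmap a) (hmap b)]
    exact hsymm b a h

/-- Lebesgue measure of a Lipschitz image. -/
lemma volume_image_hmap_le (A : Set (EuclideanSpace ℝ (Fin 2))) :
    volume (hmap '' A) ≤ 4 * volume A := by
  have hμ : (μH[(finrank ℝ (EuclideanSpace ℝ (Fin 2)) : ℝ)] : Measure (EuclideanSpace ℝ (Fin 2)))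
      = Measure.addHaarScalarFactor μH[(finrank ℝ (EuclideanSpace ℝ (Fin 2)) : ℝ)]
          (volume : Measure (EuclideanSpace ℝ (Fin 2))) • volume :=
    Measure.isAddLeftInvariant_eq_smul _ _
  set c : ℝ≥0 := Measure.addHaarScalarFactor
      (μH[(finrank ℝ (EuclideanSpace ℝ (Fin 2)) : ℝ)] : Measure (EuclideanSpace ℝ (Fin 2)))
      (volume : Measure (EuclideanSpace ℝ (Fin 2))) with hc
  have hcpos : 0 < c := Measure.addHaarScalarFactor_pos_of_isAddHaarMeasure _ _
  have himg : μH[(finrank ℝ (EuclideanSpace ℝ (Fin 2)) : ℝ)] (hmap '' A)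
      ≤ ((2:ℝ≥0) : ℝ≥0∞) ^ ((finrank ℝ (EuclideanSpace ℝ (Fin 2)) : ℕ) : ℝ)
        * μH[(finrank ℝ (EuclideanSpace ℝ (Fin 2)) : ℝ)] A :=
    hmap_lipschitz.hausdorffMeasure_image_le (by positivity) A
  have h4 : ((2:ℝ≥0) : ℝ≥0∞) ^ ((finrank ℝ (EuclideanSpace ℝ (Fin 2)) : ℕ) : ℝ) = 4 := by
    rw [finrank_euclideanSpace_fin, ENNReal.rpow_natCast]
    norm_num
  have happ : ∀ S : Set (EuclideanSpace ℝ (Fin 2)),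
      μH[(finrank ℝ (EuclideanSpace ℝ (Fin 2)) : ℝ)] S = (c : ℝ≥0∞) * volume S := by
    intro S
    conv_lhs => rw [hμ]
    simp [← hc]
  rw [happ, happ, h4] at himg
  have hc0 : (c : ℝ≥0∞) ≠ 0 := by exact_mod_cast hcpos.ne'
  have hct : (c : ℝ≥0∞) ≠ ⊤ := ENNReal.coe_ne_top
  calc volume (hmap '' A) = (c:ℝ≥0∞)⁻¹ * ((c:ℝ≥0∞) * volume (hmap '' A)) := by
        rw [← mul_assoc, ENNReal.inv_mul_cancel hc0 hct, one_mul]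
    _ ≤ (c:ℝ≥0∞)⁻¹ * (4 * ((c:ℝ≥0∞) * volume A)) := by gcongr
    _ = ((c:ℝ≥0∞)⁻¹ * (c:ℝ≥0∞)) * (4 * volume A) := by ring
    _ = 4 * volume A := by rw [ENNReal.inv_mul_cancel hc0 hct, one_mul]

section fmap
variable {f : EuclideanSpace ℝ (Fin 2) → EuclideanSpace ℝ (Fin 2)}
  (hf0 : f 0 = 0)
  (hf1 : ∀ x : EuclideanSpace ℝ (Fin 2), 0 < ‖x‖ → ‖x‖ < 1 →
      f x = (‖x‖ ^ ((1 : ℝ) / 2)) • (‖x‖⁻¹ • x))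
  (hf2 : ∀ x : EuclideanSpace ℝ (Fin 2), 1 ≤ ‖x‖ → f x = x)

include hf0 hf1 hf2

lemma fmap_formula : f = fun x => if ‖x‖ < 1 then (‖x‖ ^ ((1:ℝ)/2) * ‖x‖⁻¹) • x else x := by
  funext x
  rcases eq_or_ne x 0 with rfl | hx
  · simp [hf0]
  · have hx' : 0 < ‖x‖ := norm_pos_iff.mpr hx
    by_cases h1 : ‖x‖ < 1
    · rw [if_pos h1, hf1 x hx' h1, smul_smul]
    · rw [if_neg h1, hf2 x (not_lt.mp h1)]

lemma fmap_measurable : Measurable f := by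
  rw [fmap_formula hf0 hf1 hf2]
  have hset : MeasurableSet {x : EuclideanSpace ℝ (Fin 2) | ‖x‖ < 1} :=
    measurableSet_lt (measurable_norm) measurable_const
  apply Measurable.ite hset ?_ measurable_id
  have h1 : Measurable fun x : EuclideanSpace ℝ (Fin 2) => ‖x‖ ^ ((1:ℝ)/2) * ‖x‖⁻¹ := by
    fun_prop
  exact h1.smul measurable_id

lemma hmap_comp_fmap : ∀ x, hmap (f x) = x := by
  intro x
  rcases eq_or_ne x 0 with rfl | hx
  · simp [hf0, hmap]
  · have hx' : 0 < ‖x‖ := norm_pos_iff.mpr hx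
    by_cases h1 : ‖x‖ < 1
    · rw [hf1 x hx' h1, smul_smul]
      have hnorm : ‖(‖x‖ ^ ((1:ℝ)/2) * ‖x‖⁻¹) • x‖ = ‖x‖ ^ ((1:ℝ)/2) := by
        rw [norm_smul, Real.norm_eq_abs, abs_of_nonneg (by positivity)]
        rw [mul_assoc, inv_mul_cancel₀ hx'.ne', mul_one]
      have hle : ‖(‖x‖ ^ ((1:ℝ)/2) * ‖x‖⁻¹) • x‖ ≤ 1 := by
        rw [hnorm]
        exact Real.rpow_le_one (norm_nonneg x) h1.le (by norm_num)
      rw [hmap, if_pos hle, hnorm, smul_smul]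
      have : ‖x‖ ^ ((1:ℝ)/2) * (‖x‖ ^ ((1:ℝ)/2) * ‖x‖⁻¹) = 1 := by
        rw [← mul_assoc, ← Real.rpow_add hx']
        norm_num
        exact mul_inv_cancel₀ hx'.ne'
      rw [this, one_smul]
    · push_neg at h1
      rw [hf2 x h1, hmap]
      by_cases he : ‖x‖ ≤ 1
      · have : ‖x‖ = 1 := le_antisymm he h1
        rw [if_pos he, this, one_smul]
      · rw [if_neg he]

lemma map_fmap_le : Measure.map f volume
    ≤ (4 : ℝ≥0∞) • (volume : Measure (EuclideanSpace ℝ (Fin 2))) := by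
  apply Measure.le_intro
  intro A hA _
  rw [Measure.map_apply (fmap_measurable hf0 hf1 hf2) hA]
  have hsub : f ⁻¹' A ⊆ hmap '' A := by
    intro x hx
    exact ⟨f x, hx, hmap_comp_fmap hf0 hf1 hf2 x⟩
  calc volume (f ⁻¹' A) ≤ volume (hmap '' A) := measure_mono hsub
    _ ≤ 4 * volume A := volume_image_hmap_le A
    _ = ((4:ℝ≥0∞) • (volume : Measure (EuclideanSpace ℝ (Fin 2)))) A := by
        simp [Measure.smul_apply, smul_eq_mul]

lemma lintegral_comp_fmap_le (g : EuclideanSpace ℝ (Fin 2) → ℝ≥0∞) (hg : Measurable g) :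
    ∫⁻ x, g (f x) ∂volume ≤ 4 * ∫⁻ a, g a ∂volume := by
  rw [← lintegral_map hg (fmap_measurable hf0 hf1 hf2)]
  calc ∫⁻ a, g a ∂(Measure.map f volume)
      ≤ ∫⁻ a, g a ∂((4:ℝ≥0∞) • (volume : Measure (EuclideanSpace ℝ (Fin 2)))) :=
        lintegral_mono' (map_fmap_le hf0 hf1 hf2) (le_refl _)
    _ = 4 * ∫⁻ a, g a ∂volume := lintegral_smul_measure _ _

lemma double_comp_le (Φ : EuclideanSpace ℝ (Fin 2) × EuclideanSpace ℝ (Fin 2) → ℝ≥0∞)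
    (hΦ : Measurable Φ) :
    ∫⁻ x, ∫⁻ y, Φ (f x, f y) ∂volume ∂volume ≤ 16 * ∫⁻ a, ∫⁻ b, Φ (a, b) ∂volume ∂volume := by
  set G : EuclideanSpace ℝ (Fin 2) → ℝ≥0∞ := fun a => ∫⁻ b, Φ (a, b) ∂volume with hG
  have hGm : Measurable G := hΦ.lintegral_prod_right'
  have step1 : ∀ x : EuclideanSpace ℝ (Fin 2), ∫⁻ y, Φ (f x, f y) ∂volume ≤ 4 * G (f x) := by
    intro x
    exact lintegral_comp_fmap_le hf0 hf1 hf2 (fun b => Φ (f x, b))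
      (hΦ.comp measurable_prodMk_left)
  calc ∫⁻ x, ∫⁻ y, Φ (f x, f y) ∂volume ∂volume
      ≤ ∫⁻ x, 4 * G (f x) ∂volume := lintegral_mono step1
    _ = 4 * ∫⁻ x, G (f x) ∂volume := by
        have : Measurable fun x : EuclideanSpace ℝ (Fin 2) => G (f x) :=
          hGm.comp (fmap_measurable hf0 hf1 hf2)
        rw [lintegral_const_mul _ this]
    _ ≤ 4 * (4 * ∫⁻ a, G a ∂volume) :=
        mul_le_mul_right (lintegral_comp_fmap_le hf0 hf1 hf2 G hGm) _
    _ = 16 * ∫⁻ a, ∫⁻ b, Φ (a, b) ∂volume ∂volume := by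
        rw [← mul_assoc]; norm_num; rfl
end fmap

/- ## Real-variable elementary inequalities -/

lemma rpow_two' (x : ℝ) : x ^ (2:ℝ) = x^2 := by
  rw [show (2:ℝ) = ((2:ℕ):ℝ) from by norm_num, Real.rpow_natCast]

section realineq
variable {s s' p : ℝ}

lemma near_real {δ D : ℝ} (hδ0 : 0 ≤ δ) (hδ2 : δ ≤ 2) (hD : δ^2/4 ≤ D)
    (hs : 0 < s) (hs' : 0 < s') (hp : 1 ≤ p) (hss' : 2 ≤ (s - 2 * s') * p) :
    δ ^ (s*p) * δ^2 ≤ (4 ^ (s'*p+2) * 2 ^ (s*p)) * (D ^ (s'*p) * D^2) := by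
  have hp0 : 0 < p := lt_of_lt_of_le one_pos hp
  have hsp : 0 < s * p := mul_pos hs hp0
  have hs'p : 0 < s' * p := mul_pos hs' hp0
  rcases eq_or_lt_of_le hδ0 with heq | hδpos
  · have hD0 : 0 ≤ D := le_trans (by positivity) hD
    rw [← heq, Real.zero_rpow (ne_of_gt hsp), zero_mul]
    exact mul_nonneg (by positivity) (mul_nonneg (Real.rpow_nonneg hD0 _) (sq_nonneg D))
  · have hD0 : 0 < D := lt_of_lt_of_le (by positivity) hD
    have hq : (0:ℝ) < δ^2/4 := by positivity
    have h1 : (δ^2/4) ^ (s'*p) ≤ D ^ (s'*p) := Real.rpow_le_rpow hq.le hD hs'p.le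
    have h2 : (δ^2/4)^2 ≤ D^2 := by nlinarith [sq_nonneg δ]
    have hA : (δ^2/4) ^ (s'*p) * (δ^2/4)^2 = (δ^2/4) ^ (s'*p+2) := by
      rw [Real.rpow_add hq, rpow_two']
    have hB : (δ^2/4) ^ (s'*p+2) = δ ^ (2*(s'*p+2)) / 4 ^ (s'*p+2) := by
      rw [Real.div_rpow (sq_nonneg δ) (by norm_num), ← Real.rpow_natCast δ 2,
        ← Real.rpow_mul hδ0]
      norm_num
    have hC : (4:ℝ) ^ (s'*p+2) * ((δ^2/4) ^ (s'*p) * (δ^2/4)^2) = δ ^ (2*(s'*p+2)) := by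
      rw [hA, hB]
      have h40 : (0:ℝ) < 4 ^ (s'*p+2) := Real.rpow_pos_of_pos (by norm_num) _
      field_simp
    have hmain : δ ^ (s*p) * δ^2 ≤ 2 ^ (s*p) * δ ^ (2*(s'*p+2)) := by
      have e0 : 0 ≤ s*p - (2*(s'*p) + 2) := by nlinarith
      have hsplit : δ ^ (s*p) * δ^2 = δ ^ (s*p - (2*(s'*p)+2)) * δ ^ (2*(s'*p+2)) := by
        rw [← rpow_two' δ, ← Real.rpow_add hδpos, ← Real.rpow_add hδpos]
        ring_nf
      rw [hsplit]
      apply mul_le_mul_of_nonneg_right _ (Real.rpow_nonneg hδ0 _)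
      calc δ ^ (s*p - (2*(s'*p)+2)) ≤ 2 ^ (s*p - (2*(s'*p)+2)) :=
            Real.rpow_le_rpow hδ0 hδ2 e0
        _ ≤ 2 ^ (s*p) := Real.rpow_le_rpow_of_exponent_le (by norm_num) (by nlinarith)
    calc δ ^ (s*p) * δ^2 ≤ 2 ^ (s*p) * δ ^ (2*(s'*p+2)) := hmain
      _ = 2 ^ (s*p) * (4 ^ (s'*p+2) * ((δ^2/4) ^ (s'*p) * (δ^2/4)^2)) := by rw [hC]
      _ ≤ 2 ^ (s*p) * (4 ^ (s'*p+2) * (D ^ (s'*p) * D^2)) := by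
          apply mul_le_mul_of_nonneg_left _ (Real.rpow_nonneg (by norm_num) _)
          apply mul_le_mul_of_nonneg_left _ (Real.rpow_nonneg (by norm_num) _)
          exact mul_le_mul h1 h2 (by positivity) (Real.rpow_nonneg hD0.le _)
      _ = (4 ^ (s'*p+2) * 2 ^ (s*p)) * (D ^ (s'*p) * D^2) := by ring

lemma far_real {δ D : ℝ} (hδ : 2 < δ) (hD : δ/2 ≤ D) (hs' : 0 < s') (hp : 1 ≤ p) :
    δ ^ (s'*p+2) ≤ 2 ^ (s'*p+2) * (D ^ (s'*p) * D^2) := by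
  have hp0 : 0 < p := lt_of_lt_of_le one_pos hp
  have hs'p : 0 < s' * p := mul_pos hs' hp0
  have hδ0 : (0:ℝ) < δ := by linarith
  have hD0 : (0:ℝ) < D := by linarith
  have h1 : (δ/2) ^ (s'*p) ≤ D ^ (s'*p) := Real.rpow_le_rpow (by positivity) hD hs'p.le
  have h2 : (δ/2)^2 ≤ D^2 := by nlinarith
  have hkey : 2 ^ (s'*p+2) * ((δ/2) ^ (s'*p) * (δ/2)^2) = δ ^ (s'*p+2) := by
    rw [show (δ/2) ^ (s'*p) * (δ/2)^2 = (δ/2) ^ (s'*p+2) from by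
      rw [Real.rpow_add (by positivity), rpow_two']]
    rw [Real.div_rpow hδ0.le (by norm_num)]
    have h20 : (0:ℝ) < 2 ^ (s'*p+2) := Real.rpow_pos_of_pos (by norm_num) _
    field_simp
  calc δ ^ (s'*p+2) = 2 ^ (s'*p+2) * ((δ/2) ^ (s'*p) * (δ/2)^2) := hkey.symm
    _ ≤ 2 ^ (s'*p+2) * (D ^ (s'*p) * D^2) := by
        apply mul_le_mul_of_nonneg_left _ (Real.rpow_nonneg (by norm_num) _)
        exact mul_le_mul h1 h2 (by positivity) (Real.rpow_nonneg hD0.le _)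

lemma diff_rpow_le (x y : ℝ) (hp : 1 ≤ p) :
    |x - y| ^ p ≤ 2 ^ p * (|x| ^ p + |y| ^ p) := by
  have hp0 : 0 < p := lt_of_lt_of_le one_pos hp
  have h1 : |x - y| ≤ 2 * max |x| |y| := by
    calc |x - y| ≤ |x| + |y| := abs_sub _ _
      _ ≤ 2 * max |x| |y| := by
          rcases le_total |x| |y| with h | h
          · rw [max_eq_right h]; linarith
          · rw [max_eq_left h]; linarith
  calc |x - y| ^ p ≤ (2 * max |x| |y|) ^ p :=
        Real.rpow_le_rpow (abs_nonneg _) h1 hp0.le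
    _ = 2 ^ p * (max |x| |y|) ^ p :=
        Real.mul_rpow (by norm_num) (le_max_iff.mpr (Or.inl (abs_nonneg _)))
    _ ≤ 2 ^ p * (|x| ^ p + |y| ^ p) := by
        apply mul_le_mul_of_nonneg_left _ (by positivity)
        rcases le_total |x| |y| with h | h
        · rw [max_eq_right h]
          nlinarith [Real.rpow_nonneg (abs_nonneg x) p]
        · rw [max_eq_left h]
          nlinarith [Real.rpow_nonneg (abs_nonneg y) p]
end realineq

/- ## Kernels -/

def NB : ℝ≥0∞ := volume (ball (0 : EuclideanSpace ℝ (Fin 2)) 1)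

lemma NB_ne_zero : NB ≠ 0 := (measure_ball_pos volume _ one_pos).ne'
lemma NB_ne_top : NB ≠ ⊤ := measure_ball_lt_top.ne

def KK (t p : ℝ) (v : EuclideanSpace ℝ (Fin 2) → ℝ) (a b : EuclideanSpace ℝ (Fin 2)) : ℝ≥0∞ :=
  ENNReal.ofReal (|v a - v b| ^ p) /
    (ENNReal.ofReal (dist a b ^ (t * p)) * (ENNReal.ofReal (dist a b ^ 2) * NB))

def KC (t p : ℝ) (v : EuclideanSpace ℝ (Fin 2) → ℝ) (a b : EuclideanSpace ℝ (Fin 2)) : ℝ≥0∞ :=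
  ENNReal.ofReal (|v a - v b| ^ p) /
    (ENNReal.ofReal (dist (hmap a) (hmap b) ^ (t * p)) *
      (ENNReal.ofReal (dist (hmap a) (hmap b) ^ 2) * NB))

def KF (t p : ℝ) (v : EuclideanSpace ℝ (Fin 2) → ℝ) (a b : EuclideanSpace ℝ (Fin 2)) : ℝ≥0∞ :=
  if 2 < dist a b then
    (ENNReal.ofReal (|v a| ^ p) + ENNReal.ofReal (|v b| ^ p)) *
      (ENNReal.ofReal (dist a b ^ (t * p + 2)))⁻¹
  else 0

lemma besov_eq (t p : ℝ) (v : EuclideanSpace ℝ (Fin 2) → ℝ) :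
    besovDoubleR2 t p v = ∫⁻ x, ∫⁻ y, KK t p v x y ∂volume ∂volume := by
  unfold besovDoubleR2 KK NB
  apply lintegral_congr; intro x
  apply lintegral_congr; intro y
  rw [Measure.addHaar_ball volume x dist_nonneg, finrank_euclideanSpace_fin]

section meas
variable {t p : ℝ} {v : EuclideanSpace ℝ (Fin 2) → ℝ} (hv : Measurable v)
include hv

lemma KK_meas : Measurable (Function.uncurry (KK t p v)) := by
  unfold KK Function.uncurry
  fun_prop

lemma KC_meas : Measurable (Function.uncurry (KC t p v)) := by
  have hh : Continuous hmap := hmap_lipschitz.continuous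
  unfold KC Function.uncurry
  fun_prop

lemma KF_meas : Measurable (Function.uncurry (KF t p v)) := by
  unfold KF Function.uncurry
  have hset : MeasurableSet {q : EuclideanSpace ℝ (Fin 2) × EuclideanSpace ℝ (Fin 2) |
      2 < dist q.1 q.2} :=
    measurableSet_lt measurable_const measurable_dist
  apply Measurable.ite hset ?_ measurable_const
  fun_prop

lemma A_meas : Measurable fun x : EuclideanSpace ℝ (Fin 2) => ENNReal.ofReal (|v x| ^ p) := by
  fun_prop
end meas

/- ## The pointwise master bound -/

section master
variable {s s' p : ℝ} (hs : 0 < s) (hs' : 0 < s') (hp : 1 ≤ p) (hss' : 2 ≤ (s - 2 * s') * p)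
include hs hs' hp hss'

lemma master_bound (u : EuclideanSpace ℝ (Fin 2) → ℝ) (a b : EuclideanSpace ℝ (Fin 2)) :
    KC s' p u a b ≤
      ENNReal.ofReal (4 ^ (s'*p+2) * 2 ^ (s*p)) * KK s p u a b +
      (ENNReal.ofReal (2 ^ (s'*p+2)) * NB⁻¹ * ENNReal.ofReal (2 ^ p)) * KF s' p u a b := by
  have hp0 : 0 < p := lt_of_lt_of_le one_pos hp
  rcases eq_or_ne a b with rfl | hab
  · have : |u a - u a| ^ p = 0 := by
      rw [sub_self, abs_zero, Real.zero_rpow hp0.ne']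
    simp [KC, this, Real.zero_rpow hp0.ne']
  · have hδpos : 0 < dist a b := dist_pos.mpr hab
    set δ := dist a b with hδ
    set D := dist (hmap a) (hmap b) with hD
    have hD0 : 0 ≤ D := dist_nonneg
    have hlow := hmap_lower a b
    rcases le_or_gt δ 2 with hδ2 | hδ2
    · have hmin : min δ 2 = δ := min_eq_left hδ2
      rw [hmin] at hlow
      have hDlow : δ^2/4 ≤ D := by nlinarith
      have hreal := near_real (le_of_lt hδpos) hδ2 hDlow hs hs' hp hss'
      set c1 : ℝ := 4 ^ (s'*p+2) * 2 ^ (s*p) with hc1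
      have hc1pos : 0 < c1 := by positivity
      set C1 : ℝ≥0∞ := ENNReal.ofReal c1 with hC1
      have hC1_0 : C1 ≠ 0 := by
        simp [hC1, ENNReal.ofReal_eq_zero, not_le, hc1pos]
      have hC1_top : C1 ≠ ⊤ := ENNReal.ofReal_ne_top
      set X : ℝ≥0∞ := ENNReal.ofReal (δ ^ (s*p)) * (ENNReal.ofReal (δ^2) * NB) with hX
      set Y : ℝ≥0∞ := ENNReal.ofReal (D ^ (s'*p)) * (ENNReal.ofReal (D^2) * NB) with hY
      have hXY : X ≤ C1 * Y := by
        have hXeq : X = ENNReal.ofReal (δ ^ (s*p) * δ^2) * NB := by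
          rw [hX, ENNReal.ofReal_mul (Real.rpow_nonneg hδpos.le _), mul_assoc]
        have hYeq : C1 * Y = ENNReal.ofReal (c1 * (D ^ (s'*p) * D^2)) * NB := by
          rw [hY, hC1, ENNReal.ofReal_mul hc1pos.le,
            ENNReal.ofReal_mul (Real.rpow_nonneg hD0 _)]
          ring
        rw [hXeq, hYeq]
        exact mul_le_mul_left (ENNReal.ofReal_le_ofReal hreal) NB
      set N : ℝ≥0∞ := ENNReal.ofReal (|u a - u b| ^ p) with hN
      have hKC : KC s' p u a b = N / Y := rfl
      have hKK : KK s p u a b = N / X := rfl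
      rw [hKC, hKK]
      have step : N / Y ≤ C1 * (N / X) := by
        calc N / Y = (C1 * N) / (C1 * Y) := (ENNReal.mul_div_mul_left N Y hC1_0 hC1_top).symm
          _ ≤ (C1 * N) / X := ENNReal.div_le_div (le_refl _) hXY
          _ = C1 * (N / X) := by rw [mul_div_assoc]
      exact step.trans le_self_add
    · have hmin : min δ 2 = 2 := min_eq_right hδ2.le
      rw [hmin] at hlow
      have hDlow : δ/2 ≤ D := by nlinarith
      have hDpos : 0 < D := by nlinarith
      have hreal := far_real hδ2 hDlow hs' hp
      set c : ℝ≥0∞ := ENNReal.ofReal (2 ^ (s'*p+2)) * NB⁻¹ with hc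
      have h2pos : (0:ℝ) < 2 ^ (s'*p+2) := Real.rpow_pos_of_pos (by norm_num) _
      have hc0 : c ≠ 0 := by
        apply mul_ne_zero
        · simp [ENNReal.ofReal_eq_zero, not_le, h2pos]
        · simp [ENNReal.inv_ne_zero, NB_ne_top]
      have hctop : c ≠ ⊤ := by
        apply ENNReal.mul_ne_top ENNReal.ofReal_ne_top
        simp [ENNReal.inv_ne_top, NB_ne_zero]
      set N : ℝ≥0∞ := ENNReal.ofReal (|u a - u b| ^ p) with hN
      set Y : ℝ≥0∞ := ENNReal.ofReal (D ^ (s'*p)) * (ENNReal.ofReal (D^2) * NB) with hY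
      set Z : ℝ≥0∞ := ENNReal.ofReal (δ ^ (s'*p+2)) with hZ
      set M : ℝ≥0∞ := ENNReal.ofReal (|u a| ^ p) + ENNReal.ofReal (|u b| ^ p) with hM
      have hnum : N ≤ ENNReal.ofReal (2 ^ p) * M := by
        rw [hN, hM, ← ENNReal.ofReal_add (by positivity) (by positivity),
          ← ENNReal.ofReal_mul (by positivity)]
        exact ENNReal.ofReal_le_ofReal (diff_rpow_le _ _ hp)
      have hden : Z ≤ c * Y := by
        have hW : c * Y = ENNReal.ofReal (2 ^ (s'*p+2) * (D ^ (s'*p) * D^2))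
            * (NB⁻¹ * NB) := by
          rw [hc, hY, ENNReal.ofReal_mul h2pos.le,
            ENNReal.ofReal_mul (Real.rpow_nonneg hDpos.le _)]
          ring
        rw [hW, ENNReal.inv_mul_cancel NB_ne_zero NB_ne_top, mul_one, hZ]
        exact ENNReal.ofReal_le_ofReal hreal
      have hKC : KC s' p u a b = N / Y := rfl
      have hKF : KF s' p u a b = M * Z⁻¹ := by
        rw [KF, if_pos hδ2]
      have step : N / Y ≤ (c * ENNReal.ofReal (2 ^ p)) * (M * Z⁻¹) := by
        calc N / Y = (c * N) / (c * Y) := (ENNReal.mul_div_mul_left N Y hc0 hctop).symm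
          _ ≤ (c * (ENNReal.ofReal (2 ^ p) * M)) / Z :=
              ENNReal.div_le_div (mul_le_mul_right hnum c) hden
          _ = (c * ENNReal.ofReal (2 ^ p)) * (M * Z⁻¹) := by
              rw [ENNReal.div_eq_inv_mul]
              ring
      rw [hKC, hKF]
      calc N / Y ≤ (c * ENNReal.ofReal (2 ^ p)) * (M * Z⁻¹) := step
        _ = (ENNReal.ofReal (2 ^ (s'*p+2)) * NB⁻¹ * ENNReal.ofReal (2 ^ p)) * (M * Z⁻¹) := by
            rw [hc]
        _ ≤ _ := le_add_self
end master

/- ## The radial weight -/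

def wz (k : ℝ) (z : EuclideanSpace ℝ (Fin 2)) : ℝ≥0∞ :=
  if 2 < ‖z‖ then (ENNReal.ofReal (‖z‖ ^ k))⁻¹ else 0

lemma wz_meas (k : ℝ) : Measurable (wz k) := by
  unfold wz
  have hset : MeasurableSet {z : EuclideanSpace ℝ (Fin 2) | 2 < ‖z‖} :=
    measurableSet_lt measurable_const measurable_norm
  apply Measurable.ite hset ?_ measurable_const
  fun_prop

lemma wz_lt_top {k : ℝ} (hk : 2 < k) : ∫⁻ z, wz k z ∂volume < ⊤ := by
  have hk0 : 0 < k := by linarith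
  have hpt : ∀ z : EuclideanSpace ℝ (Fin 2), wz k z ≤
      ENNReal.ofReal ((3/2) ^ k) * ENNReal.ofReal ((1 + ‖z‖) ^ (-k)) := by
    intro z
    unfold wz
    by_cases hz : 2 < ‖z‖
    · rw [if_pos hz]
      have hz0 : (0:ℝ) < ‖z‖ := by linarith
      have h1 : (0:ℝ) < 1 + ‖z‖ := by linarith
      have hreal : (‖z‖ ^ k)⁻¹ ≤ (3/2) ^ k * ((1 + ‖z‖) ^ k)⁻¹ := by
        have hbase : 1 + ‖z‖ ≤ (3/2) * ‖z‖ := by linarith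
        have h2 : (1 + ‖z‖) ^ k ≤ ((3/2) * ‖z‖) ^ k :=
          Real.rpow_le_rpow h1.le hbase hk0.le
        have h3 : ((3/2) * ‖z‖ : ℝ) ^ k = (3/2) ^ k * ‖z‖ ^ k :=
          Real.mul_rpow (by norm_num) hz0.le
        have h4 : (0:ℝ) < (1 + ‖z‖) ^ k := Real.rpow_pos_of_pos h1 _
        have h5 : (0:ℝ) < ‖z‖ ^ k := Real.rpow_pos_of_pos hz0 _
        rw [inv_le_iff_one_le_mul₀ h5]
        have hinv : (1 + ‖z‖) ^ k * ((1 + ‖z‖) ^ k)⁻¹ = 1 := mul_inv_cancel₀ h4.ne'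
        calc (1:ℝ) = (1 + ‖z‖) ^ k * ((1 + ‖z‖) ^ k)⁻¹ := hinv.symm
          _ ≤ ((3/2) ^ k * ‖z‖ ^ k) * ((1 + ‖z‖) ^ k)⁻¹ := by
              apply mul_le_mul_of_nonneg_right _ (by positivity)
              rw [← h3]; exact h2
          _ = (3/2) ^ k * ((1 + ‖z‖) ^ k)⁻¹ * ‖z‖ ^ k := by ring
      calc (ENNReal.ofReal (‖z‖ ^ k))⁻¹
          = ENNReal.ofReal ((‖z‖ ^ k)⁻¹) :=
            (ENNReal.ofReal_inv_of_pos (Real.rpow_pos_of_pos hz0 _)).symm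
        _ ≤ ENNReal.ofReal ((3/2) ^ k * ((1 + ‖z‖) ^ k)⁻¹) :=
            ENNReal.ofReal_le_ofReal hreal
        _ = ENNReal.ofReal ((3/2) ^ k) * ENNReal.ofReal ((1 + ‖z‖) ^ (-k)) := by
            rw [ENNReal.ofReal_mul (by positivity), Real.rpow_neg (by positivity)]
    · rw [if_neg hz]; exact zero_le
  calc ∫⁻ z, wz k z ∂volume
      ≤ ∫⁻ z : EuclideanSpace ℝ (Fin 2),
          ENNReal.ofReal ((3/2) ^ k) * ENNReal.ofReal ((1 + ‖z‖) ^ (-k)) ∂volume :=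
        lintegral_mono hpt
    _ = ENNReal.ofReal ((3/2) ^ k)
        * ∫⁻ z : EuclideanSpace ℝ (Fin 2), ENNReal.ofReal ((1 + ‖z‖) ^ (-k)) ∂volume := by
        rw [lintegral_const_mul]
        fun_prop
    _ < ⊤ := by
        apply ENNReal.mul_lt_top ENNReal.ofReal_lt_top
        apply finite_integral_one_add_norm
        rw [finrank_euclideanSpace_fin]
        norm_num; linarith

/- ## The far-field double integral -/

section KFint
variable {t p : ℝ} {v : EuclideanSpace ℝ (Fin 2) → ℝ} (hv : Measurable v)
include hv

lemma KF_double :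
    ∫⁻ a, ∫⁻ b, KF t p v a b ∂volume ∂volume =
      2 * ((∫⁻ z, wz (t*p+2) z ∂volume) * ∫⁻ x, ENNReal.ofReal (|v x| ^ p) ∂volume) := by
  set k := t * p + 2 with hk
  set A : EuclideanSpace ℝ (Fin 2) → ℝ≥0∞ := fun x => ENNReal.ofReal (|v x| ^ p) with hA
  have hAm : Measurable A := A_meas hv
  set I : ℝ≥0∞ := ∫⁻ z, wz k z ∂volume with hI
  set P : ℝ≥0∞ := ∫⁻ x, A x ∂volume with hP
  have hrep1 : ∀ a b : EuclideanSpace ℝ (Fin 2),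
      KF t p v a b = A a * wz k (b - a) + A b * wz k (b - a) := by
    intro a b
    have hdist : dist a b = ‖b - a‖ := by rw [dist_eq_norm, norm_sub_rev]
    unfold KF wz
    rw [hdist]
    by_cases hc : 2 < ‖b - a‖
    · rw [if_pos hc, if_pos hc, add_mul]
    · rw [if_neg hc, if_neg hc, mul_zero, mul_zero, add_zero]
  have hwneg : ∀ z : EuclideanSpace ℝ (Fin 2), wz k (-z) = wz k z := by
    intro z; unfold wz; rw [norm_neg]
  have htrans : ∀ a : EuclideanSpace ℝ (Fin 2), ∫⁻ b, wz k (b - a) ∂volume = I := by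
    intro a
    simp_rw [sub_eq_add_neg]
    exact lintegral_add_right_eq_self (wz k) (-a)
  have hinner : ∀ a : EuclideanSpace ℝ (Fin 2), ∫⁻ b, KF t p v a b ∂volume
      = A a * I + ∫⁻ b, A b * wz k (b - a) ∂volume := by
    intro a
    calc ∫⁻ b, KF t p v a b ∂volume
        = ∫⁻ b, (A a * wz k (b - a) + A b * wz k (b - a)) ∂volume := by
          apply lintegral_congr; intro b; rw [hrep1 a b]
      _ = (∫⁻ b, A a * wz k (b - a) ∂volume) + ∫⁻ b, A b * wz k (b - a) ∂volume := by
          have hm1 : Measurable fun b : EuclideanSpace ℝ (Fin 2) => wz k (b - a) :=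
            (wz_meas k).comp (measurable_id.sub measurable_const)
          exact lintegral_add_left (hm1.const_mul _) _
      _ = A a * I + ∫⁻ b, A b * wz k (b - a) ∂volume := by
          have hm1 : Measurable fun b : EuclideanSpace ℝ (Fin 2) => wz k (b - a) :=
            (wz_meas k).comp (measurable_id.sub measurable_const)
          rw [lintegral_const_mul _ hm1, htrans a]
  have hswap : ∫⁻ a, ∫⁻ b, A b * wz k (b - a) ∂volume ∂volume = P * I := by
    rw [lintegral_lintegral_swap]
    · have hstep : ∀ b : EuclideanSpace ℝ (Fin 2),
          ∫⁻ a, A b * wz k (b - a) ∂volume = A b * I := by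
        intro b
        have hm2 : Measurable fun a : EuclideanSpace ℝ (Fin 2) => wz k (b - a) :=
          (wz_meas k).comp (measurable_const.sub measurable_id)
        rw [lintegral_const_mul _ hm2]
        congr 1
        have hrefl : ∀ a : EuclideanSpace ℝ (Fin 2), wz k (b - a) = wz k (a + -b) := by
          intro a
          rw [← hwneg (a + -b)]
          congr 1
          abel
        simp_rw [hrefl]
        exact lintegral_add_right_eq_self (wz k) (-b)
      simp_rw [hstep]
      exact lintegral_mul_const I hAm
    · apply Measurable.aemeasurable
      apply Measurable.mul
      · exact hAm.comp measurable_snd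
      · exact (wz_meas k).comp (measurable_snd.sub measurable_fst)
  calc ∫⁻ a, ∫⁻ b, KF t p v a b ∂volume ∂volume
      = ∫⁻ a, (A a * I + ∫⁻ b, A b * wz k (b - a) ∂volume) ∂volume := by
        apply lintegral_congr; intro a; exact hinner a
    _ = (∫⁻ a, A a * I ∂volume) + ∫⁻ a, ∫⁻ b, A b * wz k (b - a) ∂volume ∂volume :=
        lintegral_add_left (hAm.mul_const I) _
    _ = P * I + P * I := by
        rw [lintegral_mul_const I hAm, hswap]
    _ = 2 * (I * P) := by ring
end KFint

section elp
variable {p : ℝ} (hp : 1 ≤ p)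
include hp

lemma eLp_eq (v : EuclideanSpace ℝ (Fin 2) → ℝ) :
    eLpNorm v (ENNReal.ofReal p) volume
      = (∫⁻ x, ENNReal.ofReal (|v x| ^ p) ∂volume) ^ (1/p) := by
  have hp0 : 0 < p := lt_of_lt_of_le one_pos hp
  rw [eLpNorm_eq_lintegral_rpow_enorm_toReal (by simp [ENNReal.ofReal_eq_zero, not_le, hp0])
    ENNReal.ofReal_ne_top]
  rw [ENNReal.toReal_ofReal hp0.le]
  congr 1
  apply lintegral_congr
  intro x
  rw [← ofReal_norm_eq_enorm, Real.norm_eq_abs,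
    ← ENNReal.ofReal_rpow_of_nonneg (abs_nonneg _) hp0.le]
end elp


section assembleAux
variable {s s' p : ℝ}

lemma double_KK_KF {v : EuclideanSpace ℝ (Fin 2) → ℝ} (hv : Measurable v) (c1 c2 : ℝ≥0∞) :
    ∫⁻ a, ∫⁻ b, (c1 * KK s p v a b + c2 * KF s' p v a b) ∂volume ∂volume
      = c1 * besovDoubleR2 s p v
        + c2 * (2 * ((∫⁻ z, wz (s'*p+2) z ∂volume)
            * ∫⁻ x, ENNReal.ofReal (|v x| ^ p) ∂volume)) := by
  have hKKm : Measurable (Function.uncurry (KK s p v)) := KK_meas hv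
  have hKFm : Measurable (Function.uncurry (KF s' p v)) := KF_meas hv
  have hinner : ∀ a, ∫⁻ b, (c1 * KK s p v a b + c2 * KF s' p v a b) ∂volume
      = c1 * (∫⁻ b, KK s p v a b ∂volume) + c2 * (∫⁻ b, KF s' p v a b ∂volume) := by
    intro a
    have hm1 : Measurable fun b => KK s p v a b := hKKm.of_uncurry_left
    have hm2 : Measurable fun b => KF s' p v a b := hKFm.of_uncurry_left
    rw [lintegral_add_left (hm1.const_mul c1), lintegral_const_mul _ hm1,
      lintegral_const_mul _ hm2]
  have hG1 : Measurable fun a => ∫⁻ b, KK s p v a b ∂volume :=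
    hKKm.lintegral_prod_right'
  have hG2 : Measurable fun a => ∫⁻ b, KF s' p v a b ∂volume :=
    hKFm.lintegral_prod_right'
  calc ∫⁻ a, ∫⁻ b, (c1 * KK s p v a b + c2 * KF s' p v a b) ∂volume ∂volume
      = ∫⁻ a, (c1 * (∫⁻ b, KK s p v a b ∂volume)
          + c2 * (∫⁻ b, KF s' p v a b ∂volume)) ∂volume := lintegral_congr hinner
    _ = (∫⁻ a, c1 * (∫⁻ b, KK s p v a b ∂volume) ∂volume)
        + ∫⁻ a, c2 * (∫⁻ b, KF s' p v a b ∂volume) ∂volume :=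
        lintegral_add_left (hG1.const_mul c1) _
    _ = c1 * (∫⁻ a, ∫⁻ b, KK s p v a b ∂volume ∂volume)
        + c2 * (∫⁻ a, ∫⁻ b, KF s' p v a b ∂volume ∂volume) := by
        rw [lintegral_const_mul _ hG1, lintegral_const_mul _ hG2]
    _ = _ := by rw [← besov_eq, KF_double hv]

lemma double_comp_le' {f : EuclideanSpace ℝ (Fin 2) → EuclideanSpace ℝ (Fin 2)}
    (hf0 : f 0 = 0)
    (hf1 : ∀ x : EuclideanSpace ℝ (Fin 2), 0 < ‖x‖ → ‖x‖ < 1 →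
      f x = (‖x‖ ^ ((1 : ℝ) / 2)) • (‖x‖⁻¹ • x))
    (hf2 : ∀ x : EuclideanSpace ℝ (Fin 2), 1 ≤ ‖x‖ → f x = x)
    (Φ : EuclideanSpace ℝ (Fin 2) → EuclideanSpace ℝ (Fin 2) → ℝ≥0∞)
    (hΦ : Measurable (Function.uncurry Φ)) :
    ∫⁻ x, ∫⁻ y, Φ (f x) (f y) ∂volume ∂volume
      ≤ 16 * ∫⁻ a, ∫⁻ b, Φ a b ∂volume ∂volume :=
  double_comp_le hf0 hf1 hf2 (Function.uncurry Φ) hΦ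
end assembleAux

end SnowflakeAux

/-- Let `f : ℝ² → ℝ²` be the map with `f(0) = 0`,
`f(x) = (x/‖x‖) ⬝ ‖x‖^{1/2}` for `0 < ‖x‖ < 1`, and `f(x) = x` for `‖x‖ ≥ 1`, where `ℝ²`
carries the Euclidean metric and the Lebesgue measure (so it is Ahlfors `2`-regular).
Let `s, s' > 0` and `p ≥ 1` satisfy `(s − 2s')p ≥ 2`. Then there is `C > 0` such that
`‖u ∘ f‖_{B^{s'}_{p,p}(ℝ²)} ≤ C ‖u‖_{B^s_{p,p}(ℝ²)}` for every measurable `u : ℝ² → ℝ`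
with finite Besov norm; i.e. `f` induces a canonical bounded embedding
`f_# : B^s_{p,p}(ℝ²) → B^{s'}_{p,p}(ℝ²)` via composition. -/
theorem besov_embedding_snowflake_map
    (f : EuclideanSpace ℝ (Fin 2) → EuclideanSpace ℝ (Fin 2))
    (hf0 : f 0 = 0)
    (hf1 : ∀ x : EuclideanSpace ℝ (Fin 2), 0 < ‖x‖ → ‖x‖ < 1 →
      f x = (‖x‖ ^ ((1 : ℝ) / 2)) • (‖x‖⁻¹ • x))
    (hf2 : ∀ x : EuclideanSpace ℝ (Fin 2), 1 ≤ ‖x‖ → f x = x)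
    (s s' p : ℝ) (hs : 0 < s) (hs' : 0 < s') (hp : 1 ≤ p)
    (hss' : 2 ≤ (s - 2 * s') * p) :
    ∃ C : ℝ, 0 < C ∧ ∀ u : EuclideanSpace ℝ (Fin 2) → ℝ, Measurable u →
      besovNormR2 s p u ≠ ⊤ →
      besovNormR2 s' p (u ∘ f) ≤ ENNReal.ofReal C * besovNormR2 s p u := by
  have hp0 : 0 < p := lt_of_lt_of_le one_pos hp
  set C1 : ℝ≥0∞ := ENNReal.ofReal (4 ^ (s'*p+2) * 2 ^ (s*p)) with hC1
  set C2 : ℝ≥0∞ := ENNReal.ofReal (2 ^ (s'*p+2)) * NB⁻¹ * ENNReal.ofReal (2 ^ p) with hC2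
  set I : ℝ≥0∞ := ∫⁻ z, wz (s'*p+2) z ∂volume with hIdef
  have hkk2 : 2 < s'*p + 2 := by nlinarith
  have hI : I < ⊤ := wz_lt_top hkk2
  have hC2top : C2 ≠ ⊤ := by
    apply ENNReal.mul_ne_top
    apply ENNReal.mul_ne_top ENNReal.ofReal_ne_top
    · simp [ENNReal.inv_ne_top, NB_ne_zero]
    · exact ENNReal.ofReal_ne_top
  set 𝒞 : ℝ≥0∞ := 4 + (32 * (C2 * I)) ^ (1/p) + (16 * C1) ^ (1/p) with h𝒞
  have h𝒞top : 𝒞 ≠ ⊤ := by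
    apply ENNReal.add_ne_top.mpr
    constructor
    · apply ENNReal.add_ne_top.mpr
      constructor
      · norm_num
      · apply ENNReal.rpow_ne_top_of_nonneg (by positivity)
        exact ENNReal.mul_ne_top (by norm_num)
          (ENNReal.mul_ne_top hC2top hI.ne)
    · apply ENNReal.rpow_ne_top_of_nonneg (by positivity)
      exact ENNReal.mul_ne_top (by norm_num) ENNReal.ofReal_ne_top
  refine ⟨𝒞.toReal + 1, by positivity, ?_⟩
  intro u hu _hfin
  have hCle : 𝒞 ≤ ENNReal.ofReal (𝒞.toReal + 1) := by
    calc 𝒞 = ENNReal.ofReal 𝒞.toReal := (ENNReal.ofReal_toReal h𝒞top).symm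
      _ ≤ ENNReal.ofReal (𝒞.toReal + 1) := ENNReal.ofReal_le_ofReal (by linarith)
  suffices hmain : besovNormR2 s' p (u ∘ f) ≤ 𝒞 * besovNormR2 s p u by
    exact hmain.trans (mul_le_mul_left hCle _)
  set P : ℝ≥0∞ := ∫⁻ x, ENNReal.ofReal (|u x| ^ p) ∂volume with hPdef
  set X : ℝ≥0∞ := eLpNorm u (ENNReal.ofReal p) volume with hXdef
  have hXP : X = P ^ (1/p) := eLp_eq hp u
  -- L^p part
  have hLp : eLpNorm (u ∘ f) (ENNReal.ofReal p) volume ≤ 4 * X := by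
    rw [eLp_eq hp (u ∘ f), hXP]
    have hcomp : ∫⁻ x, ENNReal.ofReal (|(u ∘ f) x| ^ p) ∂volume ≤ 4 * P := by
      have := lintegral_comp_fmap_le hf0 hf1 hf2
        (fun a => ENNReal.ofReal (|u a| ^ p)) (A_meas hu)
      exact this
    calc (∫⁻ x, ENNReal.ofReal (|(u ∘ f) x| ^ p) ∂volume) ^ (1/p)
        ≤ (4 * P) ^ (1/p) := ENNReal.rpow_le_rpow hcomp (by positivity)
      _ = 4 ^ (1/p) * P ^ (1/p) := ENNReal.mul_rpow_of_nonneg _ _ (by positivity)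
      _ ≤ 4 * P ^ (1/p) := by
          apply mul_le_mul_left
          calc (4:ℝ≥0∞) ^ (1/p) ≤ 4 ^ (1:ℝ) := by
                apply ENNReal.rpow_le_rpow_of_exponent_le (by norm_num)
                rw [div_le_one hp0]; exact hp
            _ = 4 := ENNReal.rpow_one 4
  -- Seminorm part
  set D : ℝ≥0∞ := besovDoubleR2 s p u with hDdef
  have hbd : besovDoubleR2 s' p (u ∘ f) ≤ 16 * (C1 * D) + (32 * (C2 * I)) * P := by
    have hstep0 : besovDoubleR2 s' p (u ∘ f)
        = ∫⁻ x, ∫⁻ y, KC s' p u (f x) (f y) ∂volume ∂volume := by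
      rw [besov_eq]
      apply lintegral_congr; intro x
      apply lintegral_congr; intro y
      unfold KK KC
      rw [hmap_comp_fmap hf0 hf1 hf2 x, hmap_comp_fmap hf0 hf1 hf2 y]
      rfl
    have hΦm : Measurable (Function.uncurry
        (fun a b => C1 * KK s p u a b + C2 * KF s' p u a b)) :=
      ((KK_meas hu).const_mul C1).add ((KF_meas hu).const_mul C2)
    calc besovDoubleR2 s' p (u ∘ f)
        = ∫⁻ x, ∫⁻ y, KC s' p u (f x) (f y) ∂volume ∂volume := hstep0
      _ ≤ ∫⁻ x, ∫⁻ y, (C1 * KK s p u (f x) (f y) + C2 * KF s' p u (f x) (f y))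
            ∂volume ∂volume :=
          lintegral_mono fun x => lintegral_mono fun y =>
            master_bound hs hs' hp hss' u (f x) (f y)
      _ ≤ 16 * ∫⁻ a, ∫⁻ b, (C1 * KK s p u a b + C2 * KF s' p u a b) ∂volume ∂volume :=
          double_comp_le' hf0 hf1 hf2 _ hΦm
      _ = 16 * (C1 * D + C2 * (2 * (I * P))) := by rw [double_KK_KF hu C1 C2]
      _ = 16 * (C1 * D) + (32 * (C2 * I)) * P := by ring
  -- Combine
  have hsemi : (besovDoubleR2 s' p (u ∘ f)) ^ (1/p)
      ≤ (16 * C1) ^ (1/p) * D ^ (1/p) + (32 * (C2 * I)) ^ (1/p) * X := by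
    calc (besovDoubleR2 s' p (u ∘ f)) ^ (1/p)
        ≤ (16 * (C1 * D) + (32 * (C2 * I)) * P) ^ (1/p) :=
          ENNReal.rpow_le_rpow hbd (by positivity)
      _ ≤ (16 * (C1 * D)) ^ (1/p) + ((32 * (C2 * I)) * P) ^ (1/p) :=
          ENNReal.rpow_add_le_add_rpow _ _ (by positivity)
            (by rw [div_le_one hp0]; exact hp)
      _ = (16 * C1) ^ (1/p) * D ^ (1/p) + (32 * (C2 * I)) ^ (1/p) * X := by
          have hsplit : ∀ x y : ℝ≥0∞, (x * y) ^ (1/p) = x ^ (1/p) * y ^ (1/p) :=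
            fun x y => ENNReal.mul_rpow_of_nonneg x y (by positivity)
          rw [hXP]
          simp only [hsplit]
          ring
  have hfinal : besovNormR2 s' p (u ∘ f) ≤ 𝒞 * (X + D ^ (1/p)) := by
    unfold besovNormR2
    calc eLpNorm (u ∘ f) (ENNReal.ofReal p) volume + besovDoubleR2 s' p (u ∘ f) ^ (1/p)
        ≤ (4 * X) + ((16 * C1) ^ (1/p) * D ^ (1/p) + (32 * (C2 * I)) ^ (1/p) * X) :=
          add_le_add hLp hsemi
      _ = (4 + (32 * (C2 * I)) ^ (1/p)) * X + (16 * C1) ^ (1/p) * D ^ (1/p) := by ring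
      _ ≤ 𝒞 * X + 𝒞 * D ^ (1/p) := by
          apply add_le_add
          · apply mul_le_mul_left
            rw [h𝒞]
            exact le_self_add
          · apply mul_le_mul_left
            rw [h𝒞]
            exact le_add_self
      _ = 𝒞 * (X + D ^ (1/p)) := by ring
  exact hfinal
end
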